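/- arXiv:0706.1800 — 4 statements merged into one kernel-verified Lean document; each statement's English description precedes it below -/
import Mathlib

section
/- Let A be a skew shape and let λ be a partition in the support of A. Then rows(A) ⊴ λ ⊴ cols(A)^t in the (extended) dominance order, where rows(A) is the partition of row lengths of A, cols(A) is the partition of column lengths of A, and cols(A)^t is the transpose (conjugate) of cols(A). -/
open Finset

/-- The weakly decreasing rearrangement of a finite sequence (list) of natural numbers,
i.e. the partition obtained by sorting its parts into weakly decreasing order. -/
def sortDesc (l : List ℕ) : List ℕ := l.mergeSort (fun a b => b ≤ a)

/-- The (extended) dominance order on partitions, represented as weakly decreasing lists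
of natural numbers (parts beyond the length of the list are taken to be `0`):
`Dom a b` means `a ⊴ b`, i.e. `a₁ + ⋯ + a_k ≤ b₁ + ⋯ + b_k` for all `k`. -/
def Dom (a b : List ℕ) : Prop := ∀ k : ℕ, (a.take k).sum ≤ (b.take k).sum

/-- The conjugate (transpose) of a partition given as a list of natural numbers:
the `j`-th entry (0-indexed) is the number of parts that are `> j`. -/
def conj (l : List ℕ) : List ℕ :=
  (List.range (l.foldr max 0)).map (fun j => (l.filter (fun x => j < x)).length)

/-- A skew shape `λ/μ`: a pair of Young diagrams `μ ⊆ λ`. -/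
structure SkewShape where
  outer : YoungDiagram
  inner : YoungDiagram
  le : inner ≤ outer

namespace SkewShape

/-- The cells (boxes) of a skew shape: boxes of the outer diagram not in the inner one. -/
def cells (A : SkewShape) : Finset (ℕ × ℕ) := A.outer.cells \ A.inner.cells

/-- The number of rows of (the outer shape of) a skew shape. -/
def numRows (A : SkewShape) : ℕ := A.outer.colLen 0

/-- The number of columns of (the outer shape of) a skew shape. -/
def numCols (A : SkewShape) : ℕ := A.outer.rowLen 0

/-- `A.overlap k i` is the number of columns occupied in common by the `k` consecutive
rows `i, i+1, …, i+k-1` of the skew shape `A` (rows indexed from 0). -/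
def overlap (A : SkewShape) (k i : ℕ) : ℕ :=
  ((Finset.range A.numCols).filter (fun j => ∀ t, t < k → (i + t, j) ∈ A.cells)).card

/-- `rows_k(A)`: the weakly decreasing rearrangement of the row-overlap numbers
`(overlap k 0, overlap k 1, …)`; zero parts are discarded (a partition is identified
with its zero-padded versions).  `A.rowsK 1` is the partition of row lengths of `A`. -/
def rowsK (A : SkewShape) (k : ℕ) : List ℕ :=
  sortDesc (((List.range (A.numRows + 1 - k)).map (A.overlap k)).filter (fun x => 0 < x))

/-- The transpose (conjugate) of a skew shape. -/
def transpose (A : SkewShape) : SkewShape :=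
  ⟨A.outer.transpose, A.inner.transpose, YoungDiagram.transpose_mono A.le⟩

/-- `cols_l(A)`: the weakly decreasing rearrangement of the column-overlap numbers of `A`;
`A.colsK 1` is the partition of column lengths of `A`. -/
def colsK (A : SkewShape) (l : ℕ) : List ℕ := A.transpose.rowsK l

/-- `rects k l A` is the number of `k × l` rectangular subdiagrams (contiguous `k × l`
blocks of boxes) contained inside the skew shape `A`, recorded by the position of
their top-left corner. -/
def rects (A : SkewShape) (k l : ℕ) : ℕ :=
  (((Finset.range A.numRows) ×ˢ (Finset.range A.numCols)).filter
    (fun p => ∀ t, t < k → ∀ u, u < l → (p.1 + t, p.2 + u) ∈ A.cells)).card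

end SkewShape

/-- A semistandard Young tableau of skew shape `A`: a filling of the boxes of `A`
with positive integers, weakly increasing along rows and strictly increasing down
columns (entries outside `A` are recorded as `0`). -/
structure SkewSsyt (A : SkewShape) where
  entry : ℕ → ℕ → ℕ
  pos : ∀ i j, (i, j) ∈ A.cells → 1 ≤ entry i j
  zeros : ∀ i j, (i, j) ∉ A.cells → entry i j = 0
  row_weak : ∀ i j1 j2, j1 ≤ j2 → (i, j1) ∈ A.cells → (i, j2) ∈ A.cells →
      entry i j1 ≤ entry i j2
  col_strict : ∀ i1 i2 j, i1 < i2 → (i1, j) ∈ A.cells → (i2, j) ∈ A.cells →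
      entry i1 j < entry i2 j

/-- The number of boxes of `T` filled with the entry `v`. -/
def contentCount {A : SkewShape} (T : SkewSsyt A) (v : ℕ) : ℕ :=
  (A.cells.filter (fun c => T.entry c.1 c.2 = v)).card

/-- `T` has content `ν` (a partition written as a list, 0-indexed: `ν.getD v 0` is the
`(v+1)`-st part): the number of entries equal to `v + 1` is the `(v+1)`-st part of `ν`. -/
def HasContent {A : SkewShape} (T : SkewSsyt A) (ν : List ℕ) : Prop :=
  ∀ v : ℕ, contentCount T (v + 1) = ν.getD v 0

/-- `readBefore c c'` : the box `c` comes strictly before the box `c'` in the reverse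
reading order (rows top to bottom, each row read right to left). -/
def readBefore (c c' : ℕ × ℕ) : Prop := c.1 < c'.1 ∨ (c.1 = c'.1 ∧ c'.2 < c.2)

instance (c c' : ℕ × ℕ) : Decidable (readBefore c c') := by
  unfold readBefore; infer_instance

/-- `T` is a Littlewood–Richardson filling: its reverse reading word is a lattice word,
i.e. at every box `c` carrying an entry `v + 2`, the number of occurrences of `v + 2`
read so far (weakly up to `c`) is at most the number of occurrences of `v + 1` read
strictly before `c`. -/
def IsLR {A : SkewShape} (T : SkewSsyt A) : Prop :=
  ∀ c ∈ A.cells, ∀ v : ℕ, T.entry c.1 c.2 = v + 2 →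
    (A.cells.filter (fun c' => T.entry c'.1 c'.2 = v + 2 ∧ (readBefore c' c ∨ c' = c))).card ≤
    (A.cells.filter (fun c' => T.entry c'.1 c'.2 = v + 1 ∧ readBefore c' c)).card

/-- The support of the skew Schur function `s_A`: by the Littlewood–Richardson rule,
the set of partitions `ν` (weakly decreasing lists) admitting an LR filling of `A`
of content `ν`, i.e. those `ν` with `s_ν` appearing with nonzero coefficient in `s_A`. -/
def SkewShape.support (A : SkewShape) : Set (List ℕ) :=
  { ν | ν.Pairwise (· ≥ ·) ∧ ∃ T : SkewSsyt A, IsLR T ∧ HasContent T ν }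

/-- The coefficient of the Schur function `s_ν` in the Schur expansion of `s_A`:
by the Littlewood–Richardson rule, the number of LR fillings of `A` of content `ν`. -/
noncomputable def lrCoeff (A : SkewShape) (ν : List ℕ) : ℕ :=
  Nat.card { T : SkewSsyt A // IsLR T ∧ HasContent T ν }

/-- `s_A − s_B` is Schur-positive: every coefficient in the Schur expansion of the
difference is nonnegative, i.e. (by the LR rule) each LR coefficient of `B` is at most
the corresponding one of `A`. -/
def SchurPositiveDiff (A B : SkewShape) : Prop :=
  ∀ ν : List ℕ, ν.Pairwise (· ≥ ·) → lrCoeff B ν ≤ lrCoeff A ν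

/-- The skew Schur function `s_A = Σ_T x^T`, as a formal power series in the variables
`x_0, x_1, x_2, …` (variable `x_v` recording entries equal to `v + 1`): the coefficient
of the monomial with exponents `d` is the number of SSYT of shape `A` and content `d`. -/
noncomputable def skewSchur (A : SkewShape) : MvPowerSeries ℕ ℤ :=
  fun d => (Nat.card { T : SkewSsyt A // ∀ v : ℕ, contentCount T (v + 1) = d v } : ℤ)

/-- The boxes remaining after deleting the top box of every non-empty column of `A`:
a box survives iff there is a box of `A` directly above it. -/
def trimCells (A : SkewShape) : Finset (ℕ × ℕ) :=
  A.cells.filter (fun c => 1 ≤ c.1 ∧ (c.1 - 1, c.2) ∈ A.cells)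

/-- The set of boxes of the skew shape `A ∗ B`, obtained by positioning `B` immediately
below and to the left of `A` so that `A` and `B` share no common row or column. -/
def starCells (A B : SkewShape) : Finset (ℕ × ℕ) :=
  A.cells.image (fun c => (c.1, c.2 + B.numCols)) ∪
    B.cells.image (fun c => (c.1 + A.numRows, c.2))

/-- The straight shape (partition) `μ`, viewed as the skew shape `μ/(0)`. -/
def ofYD (μ : YoungDiagram) : SkewShape := ⟨μ, ⊥, bot_le⟩

/-- The list of parts `(μ_k, μ_{k+1}, …, μ_l)` (1-indexed) of a partition `μ` given as a
Young diagram, parts beyond the length of `μ` being `0`. -/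
def tailParts (μ : YoungDiagram) (k l : ℕ) : List ℕ :=
  (List.range (l + 1 - k)).map (fun t => μ.rowLen (k - 1 + t))

/-!
The upper bound is column strictness: a column holds at most `k` entries `≤ k`, so
`λ₁ + ⋯ + λ_k ≤ ∑_columns min (length, k) = (cols(A)ᵗ)₁ + ⋯ + (cols(A)ᵗ)_k`.

For the lower bound, the lattice condition matches, injectively, each entry `v + 2` with an
entry `v + 1` read before it, hence lying in a strictly higher row. Following the matching
cuts the filling into chains with entries `1, 2, …, m` that meet each row at most once. Any
`k` rows therefore meet a chain in at most `min (k, m)` boxes, which is the number of its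
entries `≤ k`; summing over the chains, `k` rows of `A` hold at most `λ₁ + ⋯ + λ_k` boxes.
-/

section Matching

variable {α β : Type*} [LinearOrder α] [DecidableEq β]

/-- Greedy matching: pair the minimum of `X` with the minimum of `Y` and recurse. -/
theorem exists_injOn_lt_of_card_le (κ : β → α) (X Y : Finset β)
    (h : ∀ x ∈ X, #{x' ∈ X | κ x' ≤ κ x} ≤ #{y ∈ Y | κ y < κ x}) :
    ∃ f : β → β, (∀ x ∈ X, f x ∈ Y ∧ κ (f x) < κ x) ∧ Set.InjOn f X := by
  induction hn : #X generalizing X Y with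
  | zero => exact ⟨id, by simp_all, by simp_all⟩
  | succ n ih =>
    obtain ⟨x₀, hx₀, hx₀_min⟩ := X.exists_min_image κ (card_pos.mp (by omega))
    have hY : ({y ∈ Y | κ y < κ x₀} : Finset β).Nonempty :=
      card_pos.mp ((card_pos.mpr ⟨x₀, by simp [hx₀]⟩).trans_le (h x₀ hx₀))
    obtain ⟨y₀, hy₀, hy₀_min⟩ := Y.exists_min_image κ (hY.mono (filter_subset _ _))
    have hy₀x₀ : κ y₀ < κ x₀ := by
      obtain ⟨y, hy⟩ := hY
      rw [mem_filter] at hy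
      exact (hy₀_min y hy.1).trans_lt hy.2
    have h' : ∀ x ∈ X.erase x₀,
        #{x' ∈ X.erase x₀ | κ x' ≤ κ x} ≤ #{y ∈ Y.erase y₀ | κ y < κ x} := by
      intro x hx
      have hx₀x := hx₀_min x (mem_of_mem_erase hx)
      rw [filter_erase, filter_erase, card_erase_of_mem (by simp [hx₀, hx₀x]),
        card_erase_of_mem (by simp [hy₀, hy₀x₀.trans_le hx₀x])]
      exact Nat.sub_le_sub_right (h x (mem_of_mem_erase hx)) 1
    obtain ⟨f, hf, hf_inj⟩ :=
      ih (X.erase x₀) (Y.erase y₀) h' (by rw [card_erase_of_mem hx₀, hn]; rfl)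
    refine ⟨Function.update f x₀ y₀, fun x hx => ?_, ?_⟩
    · rcases eq_or_ne x x₀ with rfl | hne
      · simpa [hy₀] using hy₀x₀
      · simpa [hne] using And.imp_left mem_of_mem_erase (hf x (mem_erase.mpr ⟨hne, hx⟩))
    · rw [← insert_erase hx₀, coe_insert, Set.injOn_insert (by simp)]
      refine ⟨hf_inj.congr fun z hz => (Function.update_of_ne (ne_of_mem_erase hz) ..).symm, ?_⟩
      rintro ⟨z, hz, hfz⟩
      rw [Function.update_self, Function.update_of_ne (ne_of_mem_erase hz)] at hfz
      exact (mem_erase.mp (hf z hz).1).1 hfz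

end Matching

section PredecessorMap

variable {β γ : Type*} [Preorder γ]

/-- The orbits of `φ` cut `s` into chains with labels `1, 2, …, m`, along which `ρ` strictly
increases with the label. -/
structure IsPredecessorMap (s : Finset β) (e : β → ℕ) (ρ : β → γ) (φ : β → β) : Prop where
  one_le : ∀ c ∈ s, 1 ≤ e c
  mapsTo : ∀ c ∈ s, 2 ≤ e c → φ c ∈ s
  label_map : ∀ c ∈ s, 2 ≤ e c → e (φ c) = e c - 1
  height_lt : ∀ c ∈ s, 2 ≤ e c → ρ (φ c) < ρ c
  injOn : Set.InjOn φ {c | c ∈ s ∧ 2 ≤ e c}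

def chainRoot (e : β → ℕ) (φ : β → β) (c : β) : β := φ^[e c - 1] c

namespace IsPredecessorMap

variable {s : Finset β} {e : β → ℕ} {ρ : β → γ} {φ : β → β}

theorem iterate_mem (hφ : IsPredecessorMap s e ρ φ) {c : β} (hc : c ∈ s) {j : ℕ}
    (hj : j < e c) : φ^[j] c ∈ s ∧ e (φ^[j] c) = e c - j := by
  induction j with
  | zero => exact ⟨hc, rfl⟩
  | succ j ih =>
    obtain ⟨hmem, hlabel⟩ := ih (by omega)
    rw [Function.iterate_succ_apply']
    exact ⟨hφ.mapsTo _ hmem (by omega), by rw [hφ.label_map _ hmem (by omega), hlabel]; omega⟩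

theorem height_iterate_lt (hφ : IsPredecessorMap s e ρ φ) {c : β} (hc : c ∈ s) {j : ℕ}
    (hj : 0 < j) (hje : j < e c) : ρ (φ^[j] c) < ρ c := by
  induction j with
  | zero => omega
  | succ j ih =>
    obtain ⟨hmem, hlabel⟩ := hφ.iterate_mem hc (j := j) (by omega)
    rw [Function.iterate_succ_apply']
    refine (hφ.height_lt _ hmem (by omega)).trans_le ?_
    rcases Nat.eq_zero_or_pos j with rfl | hj
    · exact le_rfl
    · exact (ih hj (by omega)).le

theorem injOn_iterate (hφ : IsPredecessorMap s e ρ φ) (j : ℕ) :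
    Set.InjOn φ^[j] {c | c ∈ s ∧ j < e c} := by
  induction j with
  | zero => exact Set.injOn_id _
  | succ j ih =>
    rintro c ⟨hc, hcj⟩ c' ⟨hc', hcj'⟩ h
    simp only [Function.iterate_succ_apply'] at h
    obtain ⟨hmem, hlabel⟩ := hφ.iterate_mem hc (j := j) (by omega)
    obtain ⟨hmem', hlabel'⟩ := hφ.iterate_mem hc' (j := j) (by omega)
    exact ih ⟨hc, by omega⟩ ⟨hc', by omega⟩
      (hφ.injOn ⟨hmem, by omega⟩ ⟨hmem', by omega⟩ h)

theorem chainRoot_iterate (hφ : IsPredecessorMap s e ρ φ) {c : β} (hc : c ∈ s) {j : ℕ}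
    (hj : j < e c) : chainRoot e φ (φ^[j] c) = chainRoot e φ c := by
  rw [chainRoot, chainRoot, (hφ.iterate_mem hc hj).2, ← Function.iterate_add_apply]
  congr 1
  omega

theorem eq_iterate_of_chainRoot_eq (hφ : IsPredecessorMap s e ρ φ) {c c' : β} (hc : c ∈ s)
    (hc' : c' ∈ s) (hroot : chainRoot e φ c = chainRoot e φ c') (hle : e c ≤ e c') :
    c = φ^[e c' - e c] c' := by
  have h₁ := hφ.one_le c hc
  obtain ⟨hmem, hlabel⟩ := hφ.iterate_mem hc' (j := e c' - e c) (by omega)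
  refine hφ.injOn_iterate (e c - 1) ⟨hc, by omega⟩ ⟨hmem, by omega⟩ ?_
  rw [← Function.iterate_add_apply, show e c - 1 + (e c' - e c) = e c' - 1 by omega]
  exact hroot

theorem injOn_height_chain (hφ : IsPredecessorMap s e ρ φ) (r : β) :
    Set.InjOn ρ {c | c ∈ s ∧ chainRoot e φ c = r} := by
  suffices key : ∀ c c', c ∈ s → c' ∈ s → chainRoot e φ c = chainRoot e φ c' →
      e c ≤ e c' → ρ c = ρ c' → c = c' by
    rintro c ⟨hc, rfl⟩ c' ⟨hc', hroot⟩ h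
    rcases le_total (e c) (e c') with hle | hle
    · exact key c c' hc hc' hroot.symm hle h
    · exact (key c' c hc' hc hroot hle h.symm).symm
  intro c c' hc hc' hroot hle h
  have hc_eq := hφ.eq_iterate_of_chainRoot_eq hc hc' hroot hle
  rcases hle.lt_or_eq with hlt | heq
  · have := hφ.height_iterate_lt hc' (j := e c' - e c) (by omega) (by have := hφ.one_le c hc; omega)
    rw [← hc_eq, h] at this
    exact (lt_irrefl _ this).elim
  · rwa [heq, Nat.sub_self, Function.iterate_zero_apply] at hc_eq

/-- A chain reaching a label `> k` has `k` elements of label `≤ k`, and `ρ` is injective on it. -/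
theorem card_height_mem_chain_le [DecidableEq β] [DecidableEq γ] (hφ : IsPredecessorMap s e ρ φ)
    (r : β) {S : Finset γ} {k : ℕ} (hS : #S ≤ k) :
    #{c ∈ s | ρ c ∈ S ∧ chainRoot e φ c = r} ≤ #{c ∈ s | e c ≤ k ∧ chainRoot e φ c = r} := by
  by_cases hlong : ∃ c ∈ s, chainRoot e φ c = r ∧ k < e c
  · obtain ⟨c, hc, rfl, hk⟩ := hlong
    calc #{c' ∈ s | ρ c' ∈ S ∧ chainRoot e φ c' = chainRoot e φ c}
        ≤ #S := card_le_card_of_injOn ρ (fun c' hc' => (mem_filter.mp hc').2.1)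
          ((hφ.injOn_height_chain _).mono fun c' hc' => by
            simp only [coe_filter, Set.mem_ofPred_eq] at hc'
            exact ⟨hc'.1, hc'.2.2⟩)
      _ ≤ #(range k) := by rwa [card_range]
      _ ≤ #{c' ∈ s | e c' ≤ k ∧ chainRoot e φ c' = chainRoot e φ c} := by
        refine card_le_card_of_injOn (fun u => φ^[e c - k + u] c) (fun u hu => ?_) ?_
        · have hj : e c - k + u < e c := by rw [coe_range, Set.mem_Iio] at hu; omega
          obtain ⟨hmem, hlabel⟩ := hφ.iterate_mem hc hj
          exact mem_filter.mpr ⟨hmem, hlabel.trans_le (by omega), hφ.chainRoot_iterate hc hj⟩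
        · intro u hu u' hu' h
          rw [coe_range, Set.mem_Iio] at hu hu'
          have := congrArg e h
          rw [(hφ.iterate_mem hc (j := e c - k + u) (by omega)).2,
            (hφ.iterate_mem hc (j := e c - k + u') (by omega)).2] at this
          omega
  · push Not at hlong
    exact card_le_card (monotone_filter_right _ fun c hc h => ⟨hlong c hc h.2, h.2⟩)

theorem card_height_mem_le [DecidableEq γ] (hφ : IsPredecessorMap s e ρ φ) {S : Finset γ}
    {k : ℕ} (hS : #S ≤ k) : #{c ∈ s | ρ c ∈ S} ≤ #{c ∈ s | e c ≤ k} := by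
  classical
  have hroot : ∀ t : Finset β, t ⊆ s → Set.MapsTo (chainRoot e φ) t (s.image (chainRoot e φ)) :=
    fun t ht c hc => mem_image_of_mem _ (ht hc)
  rw [card_eq_sum_card_fiberwise (hroot _ (filter_subset _ s)),
    card_eq_sum_card_fiberwise (hroot _ (filter_subset _ s))]
  refine sum_le_sum fun r _ => ?_
  simpa only [filter_filter] using hφ.card_height_mem_chain_le r hS

end IsPredecessorMap
end PredecessorMap

namespace List

theorem sum_take_eq_sum_range_getD (l : List ℕ) (k : ℕ) :
    (l.take k).sum = ∑ v ∈ Finset.range k, l.getD v 0 := by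
  induction l generalizing k with
  | nil => simp
  | cons a t ih => cases k <;> simp [Finset.sum_range_succ', ih, add_comm]

theorem sum_map_range (f : ℕ → ℕ) (n : ℕ) :
    ((range n).map f).sum = ∑ i ∈ Finset.range n, f i := by
  simp [Finset.sum, Finset.range_val, Multiset.range]

theorem sum_map_filter_pos {f : ℕ → ℕ} (hf : f 0 = 0) (l : List ℕ) :
    ((l.filter (0 < ·)).map f).sum = (l.map f).sum := by
  induction l with
  | nil => rfl
  | cons a l ih => rcases Nat.eq_zero_or_pos a with rfl | ha <;> simp [*]

theorem sum_range_countP_lt (m : List ℕ) (K : ℕ) :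
    ∑ j ∈ Finset.range K, m.countP (j < ·) = (m.map (min · K)).sum := by
  induction m with
  | nil => simp
  | cons a t ih =>
    have hcard : #{j ∈ Finset.range K | j < a} = min a K := by
      rw [← Finset.card_range (min a K)]
      congr 1
      ext j
      simp only [Finset.mem_filter, Finset.mem_range]
      omega
    simp only [countP_cons, Finset.sum_add_distrib, ih, map_cons, sum_cons, decide_eq_true_eq,
      Finset.sum_boole, hcard]
    simp [add_comm]

theorem exists_finset_sum_eq_of_subperm_map {ι : Type*} [DecidableEq ι] {f : ι → ℕ}
    {l : List ℕ} {L : List ι} (hL : L.Nodup) (h : l.Subperm (L.map f)) :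
    ∃ S : Finset ι, #S = l.length ∧ l.sum = ∑ i ∈ S, f i := by
  obtain ⟨l', hperm, hsub⟩ := h
  obtain ⟨r, hr, rfl⟩ := sublist_map_iff.mp hsub
  have hnodup := hr.nodup hL
  refine ⟨r.toFinset, ?_, ?_⟩
  · rw [toFinset_card_of_nodup hnodup, ← hperm.length_eq, length_map]
  · rw [sum_toFinset _ hnodup, hperm.sum_eq]

end List

theorem sum_take_conj (m : List ℕ) (k : ℕ) :
    ((conj m).take k).sum = (m.map (min · k)).sum := by
  rw [conj, ← List.map_take, List.take_range, List.sum_map_range]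
  simp only [← List.countP_eq_length_filter, List.sum_range_countP_lt]
  refine congrArg List.sum (List.map_congr_left fun x hx => ?_)
  have := List.le_max_of_le' 0 hx le_rfl
  omega

namespace SkewShape

variable (A : SkewShape)

theorem col_lt_numCols {c : ℕ × ℕ} (hc : c ∈ A.cells) : c.2 < A.numCols :=
  (A.outer.mem_iff_lt_rowLen.mp ((YoungDiagram.mem_cells _).mp (mem_sdiff.mp hc).1)).trans_le
    (A.outer.rowLen_anti 0 c.1 c.1.zero_le)

theorem overlap_one (i : ℕ) : A.overlap 1 i = #{c ∈ A.cells | c.1 = i} := by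
  have : {c ∈ A.cells | c.1 = i} = ({j ∈ range A.numCols | (i, j) ∈ A.cells}).map
      ⟨fun j => (i, j), Prod.mk_right_injective i⟩ := by
    ext ⟨i', j⟩
    simp only [mem_filter, mem_map, mem_range, Function.Embedding.coeFn_mk, Prod.mk.injEq]
    constructor
    · rintro ⟨hc, rfl⟩
      exact ⟨j, ⟨A.col_lt_numCols hc, hc⟩, rfl, rfl⟩
    · rintro ⟨j, ⟨-, hc⟩, rfl, rfl⟩
      exact ⟨hc, rfl⟩
  simp [this, overlap]

theorem transpose_cells : A.transpose.cells = A.cells.image Prod.swap := by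
  ext ⟨i, j⟩
  simp [cells, transpose, YoungDiagram.mem_transpose]

theorem transpose_overlap_one (j : ℕ) : A.transpose.overlap 1 j = #{c ∈ A.cells | c.2 = j} := by
  rw [overlap_one, transpose_cells, filter_image, card_image_of_injective _ Prod.swap_injective]
  rfl

theorem exists_sum_take_rowsK_one (k : ℕ) :
    ∃ S : Finset ℕ, #S ≤ k ∧ ((A.rowsK 1).take k).sum = #{c ∈ A.cells | c.1 ∈ S} := by
  have hsub : ((A.rowsK 1).take k).Subperm ((List.range A.numRows).map (A.overlap 1)) :=
    ((List.take_sublist _ _).subperm.trans (List.mergeSort_perm _ _).subperm).trans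
      (by simpa using List.filter_sublist.subperm)
  obtain ⟨S, hcard, hsum⟩ := List.exists_finset_sum_eq_of_subperm_map List.nodup_range hsub
  refine ⟨S, hcard ▸ (List.length_take_le _ _), ?_⟩
  rw [hsum, card_eq_sum_card_fiberwise (f := Prod.fst) (t := S)
    (s := {c ∈ A.cells | c.1 ∈ S}) fun c hc => (mem_filter.mp hc).2]
  refine sum_congr rfl fun i hi => ?_
  rw [overlap_one, filter_filter]
  exact congrArg card (filter_congr fun c _ => ⟨fun h => ⟨h ▸ hi, h⟩, And.right⟩)

theorem sum_take_conj_colsK_one (k : ℕ) :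
    ((conj (A.colsK 1)).take k).sum = ∑ j ∈ range A.numCols, min #{c ∈ A.cells | c.2 = j} k := by
  rw [sum_take_conj, colsK, rowsK, sortDesc, ((List.mergeSort_perm _ _).map _).sum_eq,
    List.sum_map_filter_pos (by simp), List.map_map, List.sum_map_range]
  have hrows : A.transpose.numRows = A.numCols := A.outer.colLen_transpose 0
  simp only [hrows, Nat.add_sub_cancel, Function.comp_apply, transpose_overlap_one]

end SkewShape

/-- The reverse reading order as a lexicographic order: by row, then by decreasing column. -/
def readingKey (c : ℕ × ℕ) : ℕ ×ₗ ℕᵒᵈ := toLex (c.1, OrderDual.toDual c.2)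

theorem readingKey_injective : Function.Injective readingKey := by
  rintro ⟨a, b⟩ ⟨a', b'⟩ h
  simpa [readingKey] using h

theorem readBefore_iff_readingKey_lt {c c' : ℕ × ℕ} :
    readBefore c c' ↔ readingKey c < readingKey c' := by
  simp [readBefore, readingKey, Prod.Lex.toLex_lt_toLex]

theorem readBefore_or_eq_iff_readingKey_le {c c' : ℕ × ℕ} :
    readBefore c c' ∨ c = c' ↔ readingKey c ≤ readingKey c' := by
  rw [le_iff_lt_or_eq, readBefore_iff_readingKey_lt, readingKey_injective.eq_iff]

namespace SkewSsyt

variable {A : SkewShape} (T : SkewSsyt A)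

theorem fst_lt_of_readBefore {c d : ℕ × ℕ} (hc : c ∈ A.cells) (hd : d ∈ A.cells)
    (hdc : readBefore d c) (h : T.entry d.1 d.2 < T.entry c.1 c.2) : d.1 < c.1 := by
  rcases hdc with hlt | ⟨hrow, hcol⟩
  · exact hlt
  · have := T.row_weak c.1 c.2 d.2 hcol.le hc (by rwa [← hrow])
    rw [hrow] at h
    omega

theorem entry_injOn_column (j : ℕ) :
    Set.InjOn (fun c => T.entry c.1 c.2) {c | c ∈ A.cells ∧ c.2 = j} := by
  rintro ⟨i, _⟩ ⟨hc, rfl⟩ ⟨i', _⟩ ⟨hc', rfl⟩ h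
  simp only at h ⊢
  rcases lt_trichotomy i i' with hlt | rfl | hlt
  · exact absurd h (T.col_strict _ _ _ hlt hc hc').ne
  · rfl
  · exact absurd h (T.col_strict _ _ _ hlt hc' hc).ne'

theorem card_column_entry_le (j k : ℕ) :
    #{c ∈ A.cells | T.entry c.1 c.2 ≤ k ∧ c.2 = j} ≤ k := by
  calc #{c ∈ A.cells | T.entry c.1 c.2 ≤ k ∧ c.2 = j}
      ≤ #(Icc 1 k) := by
        refine card_le_card_of_injOn _ (fun c hc => ?_) ((T.entry_injOn_column j).mono ?_)
        · rw [mem_coe, mem_filter] at hc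
          exact mem_Icc.mpr ⟨T.pos _ _ hc.1, hc.2.1⟩
        · intro c hc
          rw [coe_filter] at hc
          exact ⟨hc.1, hc.2.2⟩
    _ = k := by simp

theorem card_entry_le_le_sum_min_column (k : ℕ) :
    #{c ∈ A.cells | T.entry c.1 c.2 ≤ k} ≤
      ∑ j ∈ range A.numCols, min #{c ∈ A.cells | c.2 = j} k := by
  rw [card_eq_sum_card_fiberwise (f := Prod.snd) (t := range A.numCols)
    fun c hc => mem_range.mpr (A.col_lt_numCols (mem_filter.mp hc).1)]
  refine sum_le_sum fun j _ => le_min (card_le_card fun c hc => ?_) ?_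
  · simp only [mem_filter] at hc ⊢
    exact ⟨hc.1.1, hc.2⟩
  · simpa only [filter_filter] using T.card_column_entry_le j k

theorem sum_range_contentCount (k : ℕ) :
    ∑ v ∈ range k, contentCount T (v + 1) = #{c ∈ A.cells | T.entry c.1 c.2 ≤ k} := by
  induction k with
  | zero =>
    refine (card_eq_zero.mpr (filter_eq_empty_iff.mpr fun c hc => ?_)).symm
    have := T.pos _ _ hc
    omega
  | succ k ih =>
    rw [sum_range_succ, ih, contentCount, ← card_union_of_disjoint, ← filter_or]
    · exact congrArg card (filter_congr fun c _ => by omega)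
    · exact disjoint_filter.mpr fun c _ h => by omega

end SkewSsyt

theorem HasContent.sum_take {A : SkewShape} {T : SkewSsyt A} {lam : List ℕ}
    (hT : HasContent T lam) (k : ℕ) :
    (lam.take k).sum = #{c ∈ A.cells | T.entry c.1 c.2 ≤ k} := by
  rw [← T.sum_range_contentCount, List.sum_take_eq_sum_range_getD]
  exact sum_congr rfl fun v _ => (hT v).symm

namespace IsLR

variable {A : SkewShape} {T : SkewSsyt A}

/-- For each `v`, the lattice condition is the hypothesis of `exists_injOn_lt_of_card_le` for
the boxes holding `v + 2` and `v + 1`, ordered by `readingKey`. -/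
theorem exists_isPredecessorMap (hT : IsLR T) :
    ∃ φ, IsPredecessorMap A.cells (fun c => T.entry c.1 c.2) Prod.fst φ := by
  have hmatch : ∀ v : ℕ, ∃ f : ℕ × ℕ → ℕ × ℕ,
      (∀ c ∈ A.cells.filter (fun c => T.entry c.1 c.2 = v + 2),
        f c ∈ A.cells.filter (fun d => T.entry d.1 d.2 = v + 1) ∧
        readingKey (f c) < readingKey c) ∧
      Set.InjOn f ↑(A.cells.filter fun c => T.entry c.1 c.2 = v + 2) := by
    intro v
    refine exists_injOn_lt_of_card_le readingKey _ _ fun c hc => ?_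
    rw [mem_filter] at hc
    convert hT c hc.1 v hc.2 using 2 <;> ext d <;>
      simp only [mem_filter, ← readBefore_iff_readingKey_lt, ← readBefore_or_eq_iff_readingKey_le,
        and_assoc]
  choose f hf hf_inj using hmatch
  have hφ : ∀ c ∈ A.cells, 2 ≤ T.entry c.1 c.2 →
      f (T.entry c.1 c.2 - 2) c ∈ A.cells ∧
      T.entry (f (T.entry c.1 c.2 - 2) c).1 (f (T.entry c.1 c.2 - 2) c).2 = T.entry c.1 c.2 - 1 ∧
      readingKey (f (T.entry c.1 c.2 - 2) c) < readingKey c := by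
    intro c hc h2
    obtain ⟨hmem, hlt⟩ := hf (T.entry c.1 c.2 - 2) c (mem_filter.mpr ⟨hc, by omega⟩)
    rw [mem_filter] at hmem
    exact ⟨hmem.1, by omega, hlt⟩
  refine ⟨fun c => f (T.entry c.1 c.2 - 2) c, fun c hc => T.pos _ _ hc,
    fun c hc h2 => (hφ c hc h2).1, fun c hc h2 => (hφ c hc h2).2.1, fun c hc h2 => ?_, ?_⟩
  · obtain ⟨hmem, hentry, hlt⟩ := hφ c hc h2
    exact T.fst_lt_of_readBefore hc hmem (readBefore_iff_readingKey_lt.mpr hlt) (by omega)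
  · rintro c ⟨hc, h2⟩ c' ⟨hc', h2'⟩ h
    have hentry : T.entry c.1 c.2 = T.entry c'.1 c'.2 := by
      have := (hφ c hc h2).2.1
      rw [show f _ c = f _ c' from h, (hφ c' hc' h2').2.1] at this
      omega
    simp only [hentry] at h
    refine hf_inj _ ?_ ?_ h <;> rw [coe_filter] <;> constructor <;> first | assumption | omega

theorem card_rows_le_card_entry_le (hT : IsLR T) {S : Finset ℕ} {k : ℕ} (hS : #S ≤ k) :
    #{c ∈ A.cells | c.1 ∈ S} ≤ #{c ∈ A.cells | T.entry c.1 c.2 ≤ k} :=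
  hT.exists_isPredecessorMap.elim fun _ hφ => hφ.card_height_mem_le hS

end IsLR

/-- first part of Proposition `pro:extreme_fillings`.
Let `A` be a skew shape and let `λ` be a partition in the support of `A`.  Then
`rows(A) ⊴ λ ⊴ cols(A)ᵗ` in the (extended) dominance order, where `rows(A)` is the
partition of row lengths of `A`, `cols(A)` is the partition of column lengths of `A`,
and `cols(A)ᵗ` is the transpose (conjugate) of `cols(A)`. -/
theorem support_between_rows_and_colsConj (A : SkewShape) (lam : List ℕ)
    (h : lam ∈ A.support) :
    Dom (A.rowsK 1) lam ∧ Dom lam (conj (A.colsK 1)) := by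
  obtain ⟨-, T, hLR, hT⟩ := h
  refine ⟨fun k => ?_, fun k => ?_⟩
  · obtain ⟨S, hS, hsum⟩ := A.exists_sum_take_rowsK_one k
    rw [hsum, hT.sum_take]
    exact hLR.card_rows_le_card_entry_le hS
  · rw [hT.sum_take, A.sum_take_conj_colsK_one]
    exact T.card_entry_le_le_sum_min_column k
end

section
/- For any skew shape A, the partition cols(A)^t (the transpose of the partition of column lengths of A) lies in the support of A; that is, the filling of A obtained by placing the entry i in the i-th highest box of every column of A is a Littlewood–Richardson filling of A of content cols(A)^t, so the upper bound λ ⊴ cols(A)^t on the support of A is attained. -/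
open Finset

/-! The cells of column `j` of `λ/μ` are the rows `μ'_j ≤ i < λ'_j`, so placing `i + 1 - μ'_j` in
box `(i, j)` numbers each column from the top. This is semistandard because `μ'` is weakly
decreasing, its content counts the columns of length `> v` for each entry `v + 1`, which is
`cols(A)ᵗ`, and the lattice condition holds because every box with entry `v + 2` sits directly
below a box with entry `v + 1`, which is read earlier. -/

theorem getD_conj (l : List ℕ) (v : ℕ) :
    (conj l).getD v 0 = l.countP (fun x => v < x) := by
  by_cases hv : v < l.foldr max 0
  · rw [List.getD_eq_getElem _ _ (by simpa [conj] using hv)]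
    simp [conj, List.countP_eq_length_filter]
  · rw [List.getD_eq_default _ _ (by simpa [conj] using hv), eq_comm, List.countP_eq_zero]
    intro x hx
    have : x ≤ l.foldr max 0 := List.le_max_of_le' 0 hx le_rfl
    simp only [decide_eq_true_eq]
    omega

theorem pairwise_ge_conj (l : List ℕ) : (conj l).Pairwise (· ≥ ·) := by
  refine List.Pairwise.map _ (fun a b hab => ?_) List.pairwise_lt_range
  simp only [← List.countP_eq_length_filter]
  exact List.countP_mono_left fun x _ hx => by simp only [decide_eq_true_eq] at *; omega

namespace SkewShape

variable (A : SkewShape)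

def colLength (j : ℕ) : ℕ := A.outer.colLen j - A.inner.colLen j

variable {A}

theorem mem_cells_iff {i j : ℕ} :
    (i, j) ∈ A.cells ↔ A.inner.colLen j ≤ i ∧ i < A.outer.colLen j := by
  simp [cells, YoungDiagram.mem_cells, YoungDiagram.mem_iff_lt_colLen, and_comm]

theorem mem_transpose_cells {i j : ℕ} : (i, j) ∈ A.transpose.cells ↔ (j, i) ∈ A.cells := by
  simp [cells, transpose, YoungDiagram.mem_cells, YoungDiagram.mem_transpose]

theorem lt_numCols_iff {j : ℕ} : j < A.numCols ↔ 0 < A.outer.colLen j := by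
  rw [numCols, ← YoungDiagram.mem_iff_lt_rowLen, YoungDiagram.mem_iff_lt_colLen]

theorem transpose_numRows : A.transpose.numRows = A.numCols := A.outer.colLen_transpose 0

theorem transpose_numCols : A.transpose.numCols = A.numRows := A.outer.rowLen_transpose 0

theorem transpose_overlap_one_s2 (j : ℕ) : A.transpose.overlap 1 j = A.colLength j := by
  rw [overlap, colLength, ← Nat.card_Ico]
  congr 1
  ext i
  have := A.outer.colLen_anti 0 j j.zero_le
  simp only [mem_filter, mem_range, Nat.lt_one_iff, forall_eq, add_zero, mem_transpose_cells,
    transpose_numCols, numRows]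
  rw [mem_cells_iff, mem_Ico]
  omega

theorem countP_colsK_one (v : ℕ) :
    (A.colsK 1).countP (fun x => v < x) = #{j ∈ range A.numCols | v < A.colLength j} := by
  rw [colsK, rowsK, sortDesc, (List.mergeSort_perm _ _).countP_eq, List.countP_filter,
    List.countP_map, Nat.add_sub_cancel, transpose_numRows, List.countP_eq_length_filter]
  refine congrArg List.length (List.filter_congr fun j _ => ?_)
  rw [Function.comp_apply, transpose_overlap_one_s2, Bool.and_eq_left_iff_imp]
  simp only [decide_eq_true_eq]
  omega

variable (A)

def columnTableau : SkewSsyt A where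
  entry i j := if (i, j) ∈ A.cells then i + 1 - A.inner.colLen j else 0
  pos i j h := by rw [if_pos h]; have := (mem_cells_iff.1 h).1; omega
  zeros i j h := if_neg h
  row_weak i j1 j2 hj h1 h2 := by
    have := A.inner.colLen_anti j1 j2 hj
    rw [if_pos h1, if_pos h2]; omega
  col_strict i1 i2 j hi h1 h2 := by
    have := (mem_cells_iff.1 h1).1
    rw [if_pos h1, if_pos h2]; omega

variable {A}

theorem columnTableau_entry {i j : ℕ} (h : (i, j) ∈ A.cells) :
    A.columnTableau.entry i j = i + 1 - A.inner.colLen j := if_pos h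

theorem contentCount_columnTableau (v : ℕ) :
    contentCount A.columnTableau (v + 1) = #{j ∈ range A.numCols | v < A.colLength j} := by
  have hinj : Function.Injective fun j => (A.inner.colLen j + v, j) :=
    fun j j' h => (Prod.ext_iff.1 h).2
  rw [contentCount, ← card_image_of_injective _ hinj]
  congr 1
  ext ⟨i, j⟩
  simp only [mem_filter, mem_image, mem_range, Prod.mk.injEq, lt_numCols_iff]
  constructor
  · rintro ⟨hc, he⟩
    rw [columnTableau_entry hc] at he
    have := mem_cells_iff.1 hc
    exact ⟨j, ⟨by omega, by rw [colLength]; omega⟩, by omega, rfl⟩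
  · rintro ⟨j, ⟨-, hv⟩, rfl, rfl⟩
    rw [colLength] at hv
    have hc : (A.inner.colLen j + v, j) ∈ A.cells := mem_cells_iff.2 ⟨by omega, by omega⟩
    exact ⟨hc, by rw [columnTableau_entry hc]; omega⟩

theorem isLR_columnTableau : IsLR A.columnTableau := by
  rintro ⟨i, j⟩ - v -
  refine card_le_card_of_injOn (fun c => (c.1 - 1, c.2)) ?_ ?_
  · rintro ⟨i', j'⟩ h'
    simp only [coe_filter, Set.mem_ofPred_eq] at h' ⊢
    obtain ⟨hc', he', hread⟩ := h'
    rw [columnTableau_entry hc'] at he'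
    have := mem_cells_iff.1 hc'
    have hc'' : (i' - 1, j') ∈ A.cells := mem_cells_iff.2 ⟨by omega, by omega⟩
    refine ⟨hc'', by rw [columnTableau_entry hc'']; omega, Or.inl ?_⟩
    simp only [readBefore, Prod.mk.injEq] at hread ⊢
    omega
  · rintro ⟨i₁, j₁⟩ h₁ ⟨i₂, j₂⟩ h₂ h
    simp only [coe_filter, Set.mem_ofPred_eq] at h₁ h₂
    rw [columnTableau_entry h₁.1] at h₁
    rw [columnTableau_entry h₂.1] at h₂
    simp only [Prod.mk.injEq] at h ⊢
    omega

end SkewShape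

/-- sharpness of the upper bound in Proposition `pro:extreme_fillings`.
For any skew shape `A`, the partition `cols(A)ᵗ` (the transpose of the partition of
column lengths of `A`) lies in the support of `A`; i.e. `A` has a Littlewood–Richardson
filling of content `cols(A)ᵗ` (obtained by placing the entry `i` in the `i`-th highest
box of every column), so the upper bound `λ ⊴ cols(A)ᵗ` on the support is attained. -/
theorem colsConj_mem_support (A : SkewShape) :
    conj (A.colsK 1) ∈ A.support := by
  refine ⟨pairwise_ge_conj _, A.columnTableau, SkewShape.isLR_columnTableau, fun v => ?_⟩
  rw [SkewShape.contentCount_columnTableau, getD_conj, SkewShape.countP_colsK_one]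
end

section
/- Let A and B be skew shapes. If the difference s_A − s_B of their skew Schur functions is Schur-positive, then rows(A) ⊴ rows(B) and cols(A) ⊴ cols(B) in the dominance order, where rows(·) and cols(·) denote the partitions of row lengths and column lengths respectively. -/
open Finset

/-!
By the Littlewood–Richardson rule, Schur-positivity of `s_A − s_B` puts the support of `s_B`
inside the support of `s_A`. Explicit LR fillings of `B` show that `rows(B)` and the conjugate
`cols(B)'` lie in the support of `s_B`. Conversely, let `T` be an LR filling of `A` with
content `ν`. Its lattice condition places the `x`-th occurrence of `v + 1` in a strictly higher
row than the `x`-th occurrence of `v + 2`, so the boxes with a given occurrence index lie in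
distinct rows. Any `k` rows of `A` thus hold at most `ν₁ + ⋯ + ν_k` boxes. Equal entries lie in
distinct columns, so any `k` columns hold at most `∑ min(ν_v, k) = ν'₁ + ⋯ + ν'_k` boxes.
Taking `ν = rows(B)` and `ν = cols(B)'` gives the two dominance relations.
-/

lemma sum_take_eq_sum_range_getD (l : List ℕ) (k : ℕ) :
    (l.take k).sum = ∑ v ∈ range k, l.getD v 0 := by
  induction l generalizing k with
  | nil => simp
  | cons a l ih =>
    cases k with
    | zero => simp
    | succ k => simp [Finset.sum_range_succ', ih, add_comm]

lemma card_filter_range_lt (a k : ℕ) : #{v ∈ range k | v < a} = min a k := by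
  rw [← card_range (min a k)]
  congr 1
  ext v
  simp only [mem_filter, mem_range, lt_min_iff]
  exact and_comm

lemma lt_countP_iff_lt_getD {L : List ℕ} (hL : L.Pairwise (· ≥ ·)) (x v : ℕ) :
    v < L.countP (x < ·) ↔ x < L.getD v 0 := by
  induction L generalizing v with
  | nil => simp
  | cons a L ih =>
    obtain ⟨ha, hL⟩ := List.pairwise_cons.mp hL
    by_cases hxa : x < a
    · cases v with
      | zero => simp [hxa]
      | succ v => simpa [List.countP_cons, hxa] using ih hL v
    · have h0 : L.countP (x < ·) = 0 := List.countP_eq_zero.mpr fun y hy => by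
        have := ha y hy
        simp only [decide_eq_true_eq]
        omega
      cases v with
      | zero => simp [hxa, h0]
      | succ v => simpa [List.countP_cons, hxa, h0] using ih hL v

def sortedParts (f : ℕ → ℕ) (n : ℕ) : List ℕ :=
  sortDesc (((List.range n).map f).filter (fun x => 0 < x))

lemma sortedParts_pairwise (f : ℕ → ℕ) (n : ℕ) :
    (sortedParts f n).Pairwise (· ≥ ·) := by
  unfold sortedParts sortDesc
  simpa using List.pairwise_mergeSort (le := fun a b : ℕ => decide (b ≤ a))
    (fun a b c hab hbc => by simp only [decide_eq_true_eq] at *; omega)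
    (fun a b => by simp only [Bool.or_eq_true, decide_eq_true_eq]; omega) _

lemma countP_sortedParts (f : ℕ → ℕ) (n x : ℕ) :
    (sortedParts f n).countP (x < ·) = #{i ∈ range n | x < f i} := by
  rw [sortedParts, sortDesc, (List.mergeSort_perm _ _).countP_eq, List.countP_filter,
    List.countP_map, ← Nat.count_eq_card_filter_range, Nat.count]
  exact List.countP_congr fun i _ => by
    simp only [Function.comp_apply, Bool.and_eq_true, decide_eq_true_eq]
    omega

lemma exists_sum_take_sortedParts_le (f : ℕ → ℕ) (n k : ℕ) :
    ∃ s : Finset ℕ, #s ≤ k ∧ ((sortedParts f n).take k).sum ≤ ∑ i ∈ s, f i := by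
  have hsub : ((sortedParts f n).take k).Subperm ((List.range n).map f) :=
    ((List.take_sublist _ _).subperm.trans (List.mergeSort_perm _ _).subperm).trans
      List.filter_sublist.subperm
  obtain ⟨u, hu, husub⟩ := hsub
  obtain ⟨r, hr, rfl⟩ := List.sublist_map_iff.mp husub
  have hnodup : r.Nodup := List.nodup_range.sublist hr
  refine ⟨r.toFinset, ?_, ?_⟩
  · rw [List.toFinset_card_of_nodup hnodup, ← List.length_map f, hu.length_eq]
    exact List.length_take_le _ _
  · rw [← hu.sum_eq, List.sum_toFinset f hnodup]

lemma conj_getD (L : List ℕ) (v : ℕ) : (conj L).getD v 0 = L.countP (v < ·) := by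
  rw [conj]
  by_cases hv : v < L.foldr max 0
  · simp [hv, List.countP_eq_length_filter]
  · have : L.countP (v < ·) = 0 := List.countP_eq_zero.mpr fun y hy => by
      have := List.le_max_of_le' 0 hy le_rfl
      simp only [decide_eq_true_eq]
      omega
    simp [hv, this]

lemma conj_pairwise (L : List ℕ) : (conj L).Pairwise (· ≥ ·) := by
  rw [conj, List.pairwise_map]
  refine List.pairwise_lt_range.imp fun hab => ?_
  simp only [← List.countP_eq_length_filter]
  exact List.countP_mono_left fun y _ hy => by simp only [decide_eq_true_eq] at hy ⊢; omega

/-- Both sides count the cells `(v, x)` with `v < k`, `x < M` of the diagram of `L`. -/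
lemma sum_range_min_countP {L : List ℕ} (hL : L.Pairwise (· ≥ ·)) (M k : ℕ) :
    ∑ x ∈ range M, min (L.countP (x < ·)) k = ∑ v ∈ range k, min (L.getD v 0) M := by
  have hrow (x : ℕ) : min (L.countP (x < ·)) k = #{v ∈ range k | x < L.getD v 0} := by
    simp_rw [← card_filter_range_lt, lt_countP_iff_lt_getD hL]
  have hcol (v : ℕ) : min (L.getD v 0) M = #{x ∈ range M | x < L.getD v 0} :=
    (card_filter_range_lt _ _).symm
  simp_rw [hrow, hcol]
  exact sum_card_bipartiteAbove_eq_sum_card_bipartiteBelow (fun x v => x < L.getD v 0)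

lemma sum_range_min_conj_getD {L : List ℕ} (hL : L.Pairwise (· ≥ ·)) (k : ℕ) :
    ∑ v ∈ range (conj L).length, min ((conj L).getD v 0) k = (L.take k).sum := by
  have hlen : (conj L).length = L.foldr max 0 := by simp [conj]
  simp_rw [conj_getD, hlen, sum_range_min_countP hL, sum_take_eq_sum_range_getD]
  refine sum_congr rfl fun v _ => min_eq_left ?_
  rcases lt_or_ge v L.length with hv | hv
  · exact List.le_max_of_le' 0 (List.getD_eq_getElem _ _ hv ▸ List.getElem_mem hv) le_rfl
  · rw [List.getD_eq_default _ _ hv]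
    exact Nat.zero_le _

namespace SkewShape

variable (X : SkewShape)

def rowLen (i : ℕ) : ℕ := X.outer.rowLen i - X.inner.rowLen i

def colLen (j : ℕ) : ℕ := X.outer.colLen j - X.inner.colLen j

variable {X}

lemma mem_cells_iff_s4 {c : ℕ × ℕ} :
    c ∈ X.cells ↔ X.inner.rowLen c.1 ≤ c.2 ∧ c.2 < X.outer.rowLen c.1 := by
  obtain ⟨i, j⟩ := c
  simp only [cells, mem_sdiff, YoungDiagram.mem_cells, YoungDiagram.mem_iff_lt_rowLen, not_lt]
  tauto

lemma mem_cells_iff_colLen {c : ℕ × ℕ} :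
    c ∈ X.cells ↔ X.inner.colLen c.2 ≤ c.1 ∧ c.1 < X.outer.colLen c.2 := by
  obtain ⟨i, j⟩ := c
  simp only [cells, mem_sdiff, YoungDiagram.mem_cells, YoungDiagram.mem_iff_lt_colLen, not_lt]
  tauto

lemma fst_lt_numRows {c : ℕ × ℕ} (hc : c ∈ X.cells) : c.1 < X.numRows :=
  (mem_cells_iff_colLen.mp hc).2.trans_le (X.outer.colLen_anti 0 c.2 (Nat.zero_le _))

lemma snd_lt_numCols {c : ℕ × ℕ} (hc : c ∈ X.cells) : c.2 < X.numCols :=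
  (mem_cells_iff_s4.mp hc).2.trans_le (X.outer.rowLen_anti 0 c.1 (Nat.zero_le _))

variable (X)

lemma card_filter_fst_mem (s : Finset ℕ) :
    #{c ∈ X.cells | c.1 ∈ s} = ∑ i ∈ s, X.rowLen i := by
  rw [card_eq_sum_card_fiberwise (f := Prod.fst) (s := {c ∈ X.cells | c.1 ∈ s}) (t := s)
    fun c hc => (mem_filter.mp hc).2]
  refine sum_congr rfl fun i hi => ?_
  have : {c ∈ {c ∈ X.cells | c.1 ∈ s} | c.1 = i} =
      {i} ×ˢ Ico (X.inner.rowLen i) (X.outer.rowLen i) := by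
    ext ⟨a, b⟩
    simp only [mem_filter, mem_cells_iff_s4, mem_product, mem_singleton, mem_Ico]
    constructor
    · rintro ⟨⟨h, -⟩, rfl⟩; exact ⟨rfl, h⟩
    · rintro ⟨rfl, h⟩; exact ⟨⟨h, hi⟩, rfl⟩
  rw [this, card_product, card_singleton, Nat.card_Ico, one_mul, rowLen]

lemma card_filter_snd_mem (s : Finset ℕ) :
    #{c ∈ X.cells | c.2 ∈ s} = ∑ j ∈ s, X.colLen j := by
  rw [card_eq_sum_card_fiberwise (f := Prod.snd) (s := {c ∈ X.cells | c.2 ∈ s}) (t := s)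
    fun c hc => (mem_filter.mp hc).2]
  refine sum_congr rfl fun j hj => ?_
  have : {c ∈ {c ∈ X.cells | c.2 ∈ s} | c.2 = j} =
      Ico (X.inner.colLen j) (X.outer.colLen j) ×ˢ {j} := by
    ext ⟨a, b⟩
    simp only [mem_filter, mem_cells_iff_colLen, mem_product, mem_singleton, mem_Ico]
    constructor
    · rintro ⟨⟨h, -⟩, rfl⟩; exact ⟨h, rfl⟩
    · rintro ⟨h, rfl⟩; exact ⟨⟨h, hj⟩, rfl⟩
  rw [this, card_product, card_singleton, Nat.card_Ico, mul_one, colLen]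

lemma overlap_one_s4 (i : ℕ) : X.overlap 1 i = X.rowLen i := by
  simp only [overlap, Nat.lt_one_iff, forall_eq, add_zero]
  have : {j ∈ range X.numCols | (i, j) ∈ X.cells} =
      Ico (X.inner.rowLen i) (X.outer.rowLen i) := by
    ext j
    rw [mem_filter, mem_range, mem_cells_iff_s4, mem_Ico]
    have := X.outer.rowLen_anti 0 i (Nat.zero_le _)
    exact ⟨fun h => h.2, fun h => ⟨h.2.trans_le this, h⟩⟩
  rw [this, Nat.card_Ico, rowLen]

lemma rowsK_one : X.rowsK 1 = sortedParts X.rowLen X.numRows := by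
  simp only [rowsK, sortedParts, Nat.add_sub_cancel, funext X.overlap_one_s4]

lemma colsK_one : X.colsK 1 = sortedParts X.colLen X.numCols := by
  have hlen : X.transpose.rowLen = X.colLen := by
    ext j; simp [rowLen, colLen, transpose, YoungDiagram.rowLen_transpose]
  rw [colsK, rowsK_one, hlen, numRows, transpose, YoungDiagram.colLen_transpose, numCols]

end SkewShape

lemma SkewSsyt.ext_of_cells {A : SkewShape} {T T' : SkewSsyt A}
    (h : ∀ c ∈ A.cells, T.entry c.1 c.2 = T'.entry c.1 c.2) : T = T' := by
  cases T with | mk e _ he _ _ => cases T' with | mk e' _ he' _ _ =>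
  simp only [SkewSsyt.mk.injEq]
  funext i j
  by_cases hc : (i, j) ∈ A.cells
  · exact h _ hc
  · rw [he i j hc, he' i j hc]

lemma entry_sub_one_lt_length {A : SkewShape} {T : SkewSsyt A} {ν : List ℕ}
    (hν : HasContent T ν) {c : ℕ × ℕ} (hc : c ∈ A.cells) :
    T.entry c.1 c.2 - 1 < ν.length := by
  have hpos : 0 < contentCount T (T.entry c.1 c.2) :=
    card_pos.mpr ⟨c, mem_filter.mpr ⟨hc, rfl⟩⟩
  have h := hν (T.entry c.1 c.2 - 1)
  rw [Nat.sub_add_cancel (T.pos _ _ hc)] at h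
  by_contra hlen
  rw [List.getD_eq_default _ _ (not_lt.mp hlen)] at h
  omega

lemma finite_lrFillings (A : SkewShape) (ν : List ℕ) :
    Finite { T : SkewSsyt A // IsLR T ∧ HasContent T ν } :=
  Finite.of_injective (β := A.cells → Fin (ν.length + 1))
    (fun T c => ⟨T.1.entry c.1.1 c.1.2, by have := entry_sub_one_lt_length T.2.2 c.2; omega⟩)
    fun T T' h => Subtype.ext <| SkewSsyt.ext_of_cells fun c hc => by
      simpa using congrFun h ⟨c, hc⟩

lemma SchurPositiveDiff.support_subset {A B : SkewShape} (h : SchurPositiveDiff A B) :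
    B.support ⊆ A.support := by
  rintro ν ⟨hν, T, hT⟩
  have hB : 0 < lrCoeff B ν := Nat.card_pos_iff.mpr ⟨⟨⟨T, hT⟩⟩, finite_lrFillings B ν⟩
  obtain ⟨⟨⟨T', hT'⟩⟩, -⟩ := Nat.card_pos_iff.mp (hB.trans_le (h ν hν))
  exact ⟨hν, T', hT'⟩

section Rank

variable {α β : Type*} [LinearOrder α] {key : β → α}

lemma card_filter_key_le_lt_of_lt (P : Finset β) {p p' : β} (hp' : p' ∈ P)
    (h : key p < key p') : #{q ∈ P | key q ≤ key p} < #{q ∈ P | key q ≤ key p'} := by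
  refine card_lt_card ((ssubset_iff_of_subset ?_).mpr ⟨p', ?_, ?_⟩)
  · exact fun q hq => mem_filter.mpr ⟨(mem_filter.mp hq).1, (mem_filter.mp hq).2.trans h.le⟩
  · exact mem_filter.mpr ⟨hp', le_rfl⟩
  · exact fun hp => (mem_filter.mp hp).2.not_gt h

lemma exists_card_filter_key_le_eq (hkey : Function.Injective key) (P : Finset β) {x : ℕ}
    (hx₀ : 0 < x) (hx : x ≤ #P) : ∃ p ∈ P, #{q ∈ P | key q ≤ key p} = x := by
  have hmaps : Set.MapsTo (fun p => #{q ∈ P | key q ≤ key p}) P (Icc 1 #P) := fun p hp =>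
    mem_Icc.mpr ⟨card_pos.mpr ⟨p, mem_filter.mpr ⟨hp, le_rfl⟩⟩, card_filter_le _ _⟩
  have hinj : Set.InjOn (fun p => #{q ∈ P | key q ≤ key p}) P := by
    intro p hp p' hp' heq
    by_contra hne
    rcases lt_or_gt_of_ne (hkey.ne hne) with h | h
    · exact (card_filter_key_le_lt_of_lt P hp' h).ne heq
    · exact (card_filter_key_le_lt_of_lt P hp h).ne' heq
  obtain ⟨p, hp, hpx⟩ :=
    surjOn_of_injOn_of_card_le _ hmaps hinj (by simp) (mem_Icc.mpr ⟨hx₀, hx⟩)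
  exact ⟨p, hp, hpx⟩

end Rank

def readKey (c : ℕ × ℕ) : ℕ ×ₗ ℕᵒᵈ := toLex (c.1, OrderDual.toDual c.2)

lemma readKey_injective : Function.Injective readKey := fun c c' h => by
  simpa [readKey, Prod.ext_iff] using h

lemma readKey_lt_readKey {c c' : ℕ × ℕ} : readKey c < readKey c' ↔ readBefore c c' := by
  simp [readKey, Prod.Lex.toLex_lt_toLex, readBefore]

lemma readKey_le_readKey {c c' : ℕ × ℕ} :
    readKey c ≤ readKey c' ↔ readBefore c c' ∨ c = c' := by
  rw [le_iff_lt_or_eq, readKey_lt_readKey, readKey_injective.eq_iff]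

namespace SkewSsyt

variable {A : SkewShape} (T : SkewSsyt A)

def boxesWith (w : ℕ) : Finset (ℕ × ℕ) := {c ∈ A.cells | T.entry c.1 c.2 = w}

/-- `b` is the `T.occurrence b`-th box with its entry, in the reading order. -/
def occurrence (b : ℕ × ℕ) : ℕ :=
  #{c ∈ T.boxesWith (T.entry b.1 b.2) | readKey c ≤ readKey b}

variable {T}

lemma mem_boxesWith {w : ℕ} {c : ℕ × ℕ} :
    c ∈ T.boxesWith w ↔ c ∈ A.cells ∧ T.entry c.1 c.2 = w :=
  mem_filter

lemma occurrence_pos {b : ℕ × ℕ} (hb : b ∈ A.cells) : 0 < T.occurrence b :=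
  card_pos.mpr ⟨b, mem_filter.mpr ⟨mem_boxesWith.mpr ⟨hb, rfl⟩, le_rfl⟩⟩

lemma occurrence_le_contentCount (b : ℕ × ℕ) :
    T.occurrence b ≤ contentCount T (T.entry b.1 b.2) :=
  card_filter_le _ _

lemma eq_of_occurrence_eq {b b' : ℕ × ℕ} (hb : b ∈ A.cells) (hb' : b' ∈ A.cells)
    (hentry : T.entry b.1 b.2 = T.entry b'.1 b'.2) (hocc : T.occurrence b = T.occurrence b') :
    b = b' := by
  by_contra hne
  unfold occurrence at hocc
  rw [hentry] at hocc
  rcases lt_or_gt_of_ne (readKey_injective.ne hne) with h | h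
  · exact (card_filter_key_le_lt_of_lt _ (mem_boxesWith.mpr ⟨hb', rfl⟩) h).ne hocc
  · exact (card_filter_key_le_lt_of_lt _ (mem_boxesWith.mpr ⟨hb, hentry⟩) h).ne' hocc

lemma exists_occurrence_eq_of_entry_eq_add_two (hLR : IsLR T) {b : ℕ × ℕ} (hb : b ∈ A.cells)
    {v : ℕ} (hv : T.entry b.1 b.2 = v + 2) :
    ∃ b' ∈ A.cells, T.entry b'.1 b'.2 = v + 1 ∧ T.occurrence b' = T.occurrence b ∧
      b'.1 < b.1 := by
  set P := {c ∈ T.boxesWith (v + 1) | readKey c < readKey b}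
  have hocc : T.occurrence b ≤ #P := by
    convert hLR b hb v hv using 2
    · simp only [occurrence, boxesWith, filter_filter, hv, readKey_le_readKey]
    · simp only [P, boxesWith, filter_filter, readKey_lt_readKey]
  obtain ⟨b', hb'P, hrank⟩ :=
    exists_card_filter_key_le_eq readKey_injective P (occurrence_pos hb) hocc
  obtain ⟨hb'v, hb'b⟩ := mem_filter.mp hb'P
  obtain ⟨hb', hb'e⟩ := mem_boxesWith.mp hb'v
  refine ⟨b', hb', hb'e, ?_, ?_⟩
  · rw [← hrank, occurrence, hb'e, filter_filter]
    exact congrArg card (filter_congr fun q _ => ⟨fun h => ⟨h.trans_lt hb'b, h⟩, And.right⟩)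
  · rcases readKey_lt_readKey.mp hb'b with h | ⟨hrow, hcol⟩
    · exact h
    -- in the row of `b`, `b'` would lie to the right of `b` with a smaller entry
    · have := T.row_weak b.1 b.2 b'.2 hcol.le hb (hrow ▸ hb')
      rw [hrow] at hb'e
      omega

lemma fst_lt_of_occurrence_eq_of_entry_lt (hLR : IsLR T) {b b' : ℕ × ℕ} (hb : b ∈ A.cells)
    (hb' : b' ∈ A.cells) (hocc : T.occurrence b = T.occurrence b')
    (hlt : T.entry b.1 b.2 < T.entry b'.1 b'.2) : b.1 < b'.1 := by
  induction hn : T.entry b'.1 b'.2 using Nat.strong_induction_on generalizing b' with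
  | _ n ih =>
    obtain ⟨v, rfl⟩ : ∃ v, n = v + 2 := ⟨n - 2, by have := T.pos _ _ hb; omega⟩
    obtain ⟨b'', hb'', he'', hocc'', hrow''⟩ :=
      exists_occurrence_eq_of_entry_eq_add_two hLR hb' hn
    rcases (Nat.lt_succ_iff.mp (hn ▸ hlt)).lt_or_eq with h | h
    · exact (ih (v + 1) (by omega) hb'' (hocc.trans hocc''.symm) (he''.symm ▸ h) he'').trans
        hrow''
    · rwa [eq_of_occurrence_eq hb hb'' (h.trans he''.symm) (hocc.trans hocc''.symm)]

end SkewSsyt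

namespace SkewSsyt

variable {A : SkewShape} {T : SkewSsyt A}

lemma injOn_snd_boxesWith (w : ℕ) : Set.InjOn Prod.snd (T.boxesWith w : Set (ℕ × ℕ)) := by
  intro c hc c' hc' h
  obtain ⟨hcA, hcw⟩ := mem_boxesWith.mp hc
  obtain ⟨hcA', hcw'⟩ := mem_boxesWith.mp hc'
  rcases lt_trichotomy c.1 c'.1 with hlt | heq | hgt
  · have := T.col_strict _ _ _ hlt hcA (h ▸ hcA')
    rw [← h] at hcw'
    omega
  · exact Prod.ext heq h
  · have := T.col_strict _ _ _ hgt hcA' (h.symm ▸ hcA)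
    rw [h] at hcw
    omega

lemma injOn_fst_of_occurrence_eq (hLR : IsLR T) (x : ℕ) :
    Set.InjOn Prod.fst {c | c ∈ A.cells ∧ T.occurrence c = x} := by
  rintro c ⟨hc, hcx⟩ c' ⟨hc', hc'x⟩ h
  rcases lt_trichotomy (T.entry c.1 c.2) (T.entry c'.1 c'.2) with hlt | heq | hgt
  · exact absurd h (fst_lt_of_occurrence_eq_of_entry_lt hLR hc hc' (hcx.trans hc'x.symm) hlt).ne
  · exact eq_of_occurrence_eq hc hc' heq (hcx.trans hc'x.symm)
  · exact absurd h (fst_lt_of_occurrence_eq_of_entry_lt hLR hc' hc (hc'x.trans hcx.symm) hgt).ne'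

end SkewSsyt

section Bounds

variable {A : SkewShape} {T : SkewSsyt A} {ν : List ℕ}

/-- Split the boxes by occurrence index: each class has distinct entries and distinct rows. -/
lemma card_filter_fst_mem_le (hLR : IsLR T) (hν : HasContent T ν)
    (hsort : ν.Pairwise (· ≥ ·)) (s : Finset ℕ) :
    #{c ∈ A.cells | c.1 ∈ s} ≤ ∑ v ∈ range #s, ν.getD v 0 := by
  set S := {c ∈ A.cells | c.1 ∈ s}
  have hmaps : ∀ c ∈ S, T.occurrence c - 1 ∈ range #A.cells := fun c hc => by
    have h₀ := T.occurrence_pos (mem_filter.mp hc).1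
    have h₁ := (T.occurrence_le_contentCount c).trans (card_le_card (filter_subset _ A.cells))
    rw [mem_range]
    omega
  have hfiber (x : ℕ) : #{c ∈ S | T.occurrence c - 1 = x} ≤ min (ν.countP (x < ·)) #s := by
    have hF {c : ℕ × ℕ} (hc : c ∈ {c ∈ S | T.occurrence c - 1 = x}) :
        c ∈ A.cells ∧ c.1 ∈ s ∧ T.occurrence c = x + 1 := by
      obtain ⟨⟨hc, hcs⟩, hx⟩ := mem_filter.mp hc |>.imp_left mem_filter.mp
      exact ⟨hc, hcs, by have := T.occurrence_pos hc; omega⟩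
    have hrows : #{c ∈ S | T.occurrence c - 1 = x} ≤ #s :=
      card_le_card_of_injOn Prod.fst (fun c hc => (hF hc).2.1)
        ((SkewSsyt.injOn_fst_of_occurrence_eq hLR (x + 1)).mono fun c hc =>
          show c ∈ A.cells ∧ _ from ⟨(hF hc).1, (hF hc).2.2⟩)
    refine le_min ((card_le_card_of_injOn (t := range (ν.countP (x < ·)))
      (fun c : ℕ × ℕ => T.entry c.1 c.2 - 1) (fun c hc => ?_) fun c hc c' hc' h => ?_).trans_eq
      (card_range _)) hrows
    · obtain ⟨hcA, -, hocc⟩ := hF hc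
      have hcount := hν (T.entry c.1 c.2 - 1)
      rw [Nat.sub_add_cancel (T.pos _ _ hcA)] at hcount
      have := T.occurrence_le_contentCount c
      simp only [coe_range, Set.mem_Iio, lt_countP_iff_lt_getD hsort]
      omega
    · obtain ⟨hcA, -, hocc⟩ := hF hc
      obtain ⟨hcA', -, hocc'⟩ := hF hc'
      have := T.pos _ _ hcA
      have := T.pos _ _ hcA'
      exact SkewSsyt.eq_of_occurrence_eq hcA hcA' (by simp only at h; omega)
        (hocc.trans hocc'.symm)
  calc #S = ∑ x ∈ range #A.cells, #{c ∈ S | T.occurrence c - 1 = x} :=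
        card_eq_sum_card_fiberwise hmaps
    _ ≤ ∑ x ∈ range #A.cells, min (ν.countP (x < ·)) #s := sum_le_sum fun x _ => hfiber x
    _ = ∑ v ∈ range #s, min (ν.getD v 0) #A.cells := sum_range_min_countP hsort _ _
    _ ≤ ∑ v ∈ range #s, ν.getD v 0 := sum_le_sum fun _ _ => min_le_left _ _

/-- Split the boxes by entry: each class has distinct columns. -/
lemma card_filter_snd_mem_le (hν : HasContent T ν) (s : Finset ℕ) :
    #{c ∈ A.cells | c.2 ∈ s} ≤ ∑ v ∈ range ν.length, min (ν.getD v 0) #s := by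
  set S := {c ∈ A.cells | c.2 ∈ s}
  have hmaps : ∀ c ∈ S, T.entry c.1 c.2 - 1 ∈ range ν.length := fun c hc =>
    mem_range.mpr (entry_sub_one_lt_length hν (mem_filter.mp hc).1)
  have hfiber (v : ℕ) : {c ∈ S | T.entry c.1 c.2 - 1 = v} ⊆ T.boxesWith (v + 1) := by
    intro c hc
    obtain ⟨⟨hcA, -⟩, hv⟩ := mem_filter.mp hc |>.imp_left mem_filter.mp
    exact SkewSsyt.mem_boxesWith.mpr ⟨hcA, by have := T.pos _ _ hcA; omega⟩
  rw [card_eq_sum_card_fiberwise hmaps]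
  refine sum_le_sum fun v _ => le_min ((card_le_card (hfiber v)).trans_eq (hν v)) ?_
  exact card_le_card_of_injOn Prod.snd (fun c hc => (mem_filter.mp (mem_filter.mp hc).1).2)
    ((SkewSsyt.injOn_snd_boxesWith (v + 1)).mono (hfiber v))

end Bounds

lemma dom_rowsK_one_of_mem_support {A : SkewShape} {ν : List ℕ} (hν : ν ∈ A.support) :
    Dom (A.rowsK 1) ν := by
  obtain ⟨hsort, T, hLR, hT⟩ := hν
  intro k
  obtain ⟨s, hs, hsum⟩ := exists_sum_take_sortedParts_le A.rowLen A.numRows k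
  calc ((A.rowsK 1).take k).sum ≤ ∑ i ∈ s, A.rowLen i := A.rowsK_one ▸ hsum
    _ = #{c ∈ A.cells | c.1 ∈ s} := (A.card_filter_fst_mem s).symm
    _ ≤ ∑ v ∈ range #s, ν.getD v 0 := card_filter_fst_mem_le hLR hT hsort s
    _ ≤ ∑ v ∈ range k, ν.getD v 0 := sum_le_sum_of_subset (range_subset_range.mpr hs)
    _ = (ν.take k).sum := (sum_take_eq_sum_range_getD ν k).symm

lemma sum_take_colsK_one_le {A : SkewShape} {ν : List ℕ} (hν : ν ∈ A.support) (k : ℕ) :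
    ((A.colsK 1).take k).sum ≤ ∑ v ∈ range ν.length, min (ν.getD v 0) k := by
  obtain ⟨-, T, -, hT⟩ := hν
  obtain ⟨s, hs, hsum⟩ := exists_sum_take_sortedParts_le A.colLen A.numCols k
  calc ((A.colsK 1).take k).sum ≤ ∑ j ∈ s, A.colLen j := A.colsK_one ▸ hsum
    _ = #{c ∈ A.cells | c.2 ∈ s} := (A.card_filter_snd_mem s).symm
    _ ≤ ∑ v ∈ range ν.length, min (ν.getD v 0) #s := card_filter_snd_mem_le hT s
    _ ≤ ∑ v ∈ range ν.length, min (ν.getD v 0) k :=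
        sum_le_sum fun _ _ => min_le_min_left _ hs

namespace SkewShape

variable (X : SkewShape)

def columnFilling : SkewSsyt X where
  entry i j := if (i, j) ∈ X.cells then i + 1 - X.inner.colLen j else 0
  pos i j hc := by
    have : X.inner.colLen j ≤ i := (mem_cells_iff_colLen.mp hc).1
    simp only [if_pos hc]
    omega
  zeros i j hc := if_neg hc
  row_weak i j₁ j₂ hj hc₁ hc₂ := by
    have := X.inner.colLen_anti j₁ j₂ hj
    simp only [if_pos hc₁, if_pos hc₂]
    omega
  col_strict i₁ i₂ j hi hc₁ hc₂ := by
    have : X.inner.colLen j ≤ i₁ := (mem_cells_iff_colLen.mp hc₁).1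
    simp only [if_pos hc₁, if_pos hc₂]
    omega

variable {X}

lemma columnFilling_entry {c : ℕ × ℕ} (hc : c ∈ X.cells) :
    X.columnFilling.entry c.1 c.2 = c.1 + 1 - X.inner.colLen c.2 :=
  if_pos hc

variable (X)

/-- Each box with entry `v + 2` has a box with entry `v + 1` directly above it. -/
lemma columnFilling_isLR : IsLR X.columnFilling := by
  intro c hc v hv
  refine card_le_card_of_injOn (fun c' => (c'.1 - 1, c'.2)) (fun c' hc' => ?_) ?_
  · obtain ⟨hc'A, hc'v, hc'c⟩ := mem_filter.mp hc'
    have hbounds := mem_cells_iff_colLen.mp hc'A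
    rw [columnFilling_entry hc'A] at hc'v
    have habove : (c'.1 - 1, c'.2) ∈ X.cells := mem_cells_iff_colLen.mpr (by simp only; omega)
    have hle : c'.1 ≤ c.1 := by
      rcases hc'c with h | rfl
      · exact h.elim le_of_lt (fun h => h.1.le)
      · exact le_rfl
    refine mem_filter.mpr ⟨habove, ?_, Or.inl ?_⟩
    · rw [columnFilling_entry habove]; simp only; omega
    · show c'.1 - 1 < c.1; omega
  · intro c₁ hc₁ c₂ hc₂ h
    obtain ⟨hc₁A, hc₁v, -⟩ := mem_filter.mp hc₁
    obtain ⟨hc₂A, hc₂v, -⟩ := mem_filter.mp hc₂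
    rw [columnFilling_entry hc₁A] at hc₁v
    rw [columnFilling_entry hc₂A] at hc₂v
    simp only [Prod.mk.injEq] at h
    exact Prod.ext (by omega) h.2

lemma columnFilling_hasContent : HasContent X.columnFilling (conj (X.colsK 1)) := by
  intro v
  rw [conj_getD, colsK_one, countP_sortedParts]
  refine card_bij (fun c _ => c.2) (fun c hc => ?_) (fun c hc c' hc' h => ?_) fun j hj => ?_
  · obtain ⟨hcA, hcv⟩ := mem_filter.mp hc
    have := mem_cells_iff_colLen.mp hcA
    rw [columnFilling_entry hcA] at hcv
    exact mem_filter.mpr ⟨mem_range.mpr (snd_lt_numCols hcA), by rw [colLen]; omega⟩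
  · obtain ⟨hcA, hcv⟩ := mem_filter.mp hc
    obtain ⟨hcA', hcv'⟩ := mem_filter.mp hc'
    rw [columnFilling_entry hcA] at hcv
    rw [columnFilling_entry hcA'] at hcv'
    have hle := (mem_cells_iff_colLen.mp hcA).1
    have hle' := (mem_cells_iff_colLen.mp hcA').1
    rw [h] at hcv hle
    exact Prod.ext (by omega) h
  · obtain ⟨-, hj⟩ := mem_filter.mp hj
    rw [colLen] at hj
    have hcell : (X.inner.colLen j + v, j) ∈ X.cells :=
      mem_cells_iff_colLen.mpr (by simp only; omega)
    refine ⟨_, mem_filter.mpr ⟨hcell, ?_⟩, rfl⟩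
    rw [columnFilling_entry hcell]
    simp only
    omega

lemma conj_colsK_one_mem_support : conj (X.colsK 1) ∈ X.support :=
  ⟨conj_pairwise _, X.columnFilling, X.columnFilling_isLR, X.columnFilling_hasContent⟩

end SkewShape

namespace SkewShape

variable (X : SkewShape)

def longRowsUpTo (u i : ℕ) : ℕ := #{i' ∈ range (i + 1) | u ≤ X.rowLen i'}

variable {X}

lemma longRowsUpTo_le_of_le_left {u u' : ℕ} (i : ℕ) (hu : u ≤ u') :
    X.longRowsUpTo u' i ≤ X.longRowsUpTo u i :=
  card_le_card fun _ h => mem_filter.mpr ⟨(mem_filter.mp h).1, hu.trans (mem_filter.mp h).2⟩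

lemma longRowsUpTo_le_of_le_right (u : ℕ) {i i' : ℕ} (hi : i ≤ i') :
    X.longRowsUpTo u i ≤ X.longRowsUpTo u i' :=
  card_le_card <| filter_subset_filter _ (range_subset_range.mpr (by omega))

lemma longRowsUpTo_lt_of_lt {u i i' : ℕ} (hi : i < i') (hu : u ≤ X.rowLen i') :
    X.longRowsUpTo u i < X.longRowsUpTo u i' := by
  refine card_lt_card ((ssubset_iff_of_subset ?_).mpr ⟨i', ?_, ?_⟩)
  · exact filter_subset_filter _ (range_subset_range.mpr (by omega))
  · exact mem_filter.mpr ⟨mem_range.mpr (by omega), hu⟩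
  · simp only [mem_filter, mem_range]
    omega

lemma eq_of_longRowsUpTo_eq {u i i' : ℕ} (hu : u ≤ X.rowLen i) (hu' : u ≤ X.rowLen i')
    (h : X.longRowsUpTo u i = X.longRowsUpTo u i') : i = i' := by
  rcases lt_trichotomy i i' with hlt | heq | hgt
  · exact absurd h (longRowsUpTo_lt_of_lt hlt hu').ne
  · exact heq
  · exact absurd h (longRowsUpTo_lt_of_lt hgt hu).ne'

lemma longRowsUpTo_eq_card_filter_le {u i : ℕ} (hi : i < X.numRows) :
    X.longRowsUpTo u i = #{i' ∈ {i' ∈ range X.numRows | u ≤ X.rowLen i'} | i' ≤ i} := by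
  rw [longRowsUpTo, filter_filter]
  congr 1
  ext i'
  simp only [mem_filter, mem_range]
  omega

lemma longRowsUpTo_le_card {u i : ℕ} (hi : i < X.numRows) :
    X.longRowsUpTo u i ≤ #{i' ∈ range X.numRows | u ≤ X.rowLen i'} :=
  (longRowsUpTo_eq_card_filter_le hi).trans_le (card_filter_le _ _)

lemma exists_longRowsUpTo_eq {u w : ℕ} (hw₀ : 0 < w)
    (hw : w ≤ #{i ∈ range X.numRows | u ≤ X.rowLen i}) :
    ∃ ρ, u ≤ X.rowLen ρ ∧ X.longRowsUpTo u ρ = w := by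
  obtain ⟨ρ, hρ, hrank⟩ :=
    exists_card_filter_key_le_eq (key := id) Function.injective_id _ hw₀ hw
  obtain ⟨hρrows, hρu⟩ := mem_filter.mp hρ
  exact ⟨ρ, hρu, (longRowsUpTo_eq_card_filter_le (mem_range.mp hρrows)).trans hrank⟩

variable (X)

/-- The box `u`-th from the right end of row `i` is filled with the number of rows `i' ≤ i`
of length at least `u`. -/
def rowFilling : SkewSsyt X where
  entry i j := if (i, j) ∈ X.cells then X.longRowsUpTo (X.outer.rowLen i - j) i else 0
  pos i j hc := by
    have : X.inner.rowLen i ≤ j ∧ j < X.outer.rowLen i := mem_cells_iff_s4.mp hc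
    simp only [if_pos hc]
    exact card_pos.mpr ⟨i, mem_filter.mpr ⟨self_mem_range_succ i, by rw [rowLen]; omega⟩⟩
  zeros i j hc := if_neg hc
  row_weak i j₁ j₂ hj hc₁ hc₂ := by
    simp only [if_pos hc₁, if_pos hc₂]
    exact longRowsUpTo_le_of_le_left i (by omega)
  col_strict i₁ i₂ j hi hc₁ hc₂ := by
    have : X.inner.rowLen i₂ ≤ j ∧ j < X.outer.rowLen i₂ := mem_cells_iff_s4.mp hc₂
    have := X.outer.rowLen_anti i₁ i₂ hi.le
    simp only [if_pos hc₁, if_pos hc₂]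
    exact (longRowsUpTo_le_of_le_left i₁ (by omega)).trans_lt
      (longRowsUpTo_lt_of_lt hi (by rw [rowLen]; omega))

variable {X}

lemma rowFilling_entry {c : ℕ × ℕ} (hc : c ∈ X.cells) :
    X.rowFilling.entry c.1 c.2 = X.longRowsUpTo (X.outer.rowLen c.1 - c.2) c.1 :=
  if_pos hc

lemma le_rowLen_of_mem_cells {c : ℕ × ℕ} (hc : c ∈ X.cells) :
    X.outer.rowLen c.1 - c.2 ≤ X.rowLen c.1 := by
  have := mem_cells_iff_s4.mp hc
  rw [rowLen]
  omega

lemma mem_cells_of_le_rowLen {ρ u : ℕ} (hu₀ : 0 < u) (hu : u ≤ X.rowLen ρ) :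
    (ρ, X.outer.rowLen ρ - u) ∈ X.cells := by
  rw [rowLen] at hu
  exact mem_cells_iff_s4.mpr (by simp only; omega)

lemma rowFilling_entry_of_le_rowLen {ρ u : ℕ} (hu₀ : 0 < u) (hu : u ≤ X.rowLen ρ) :
    X.rowFilling.entry ρ (X.outer.rowLen ρ - u) = X.longRowsUpTo u ρ := by
  rw [rowFilling_entry (mem_cells_of_le_rowLen hu₀ hu)]
  rw [rowLen] at hu
  simp only [Nat.sub_sub_self (show u ≤ X.outer.rowLen ρ by omega)]

lemma eq_of_rowFilling_entry_eq {c c' : ℕ × ℕ} (hc : c ∈ X.cells) (hc' : c' ∈ X.cells)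
    (hentry : X.rowFilling.entry c.1 c.2 = X.rowFilling.entry c'.1 c'.2)
    (hu : X.outer.rowLen c.1 - c.2 = X.outer.rowLen c'.1 - c'.2) : c = c' := by
  rw [rowFilling_entry hc, rowFilling_entry hc', hu] at hentry
  have hrow := eq_of_longRowsUpTo_eq (hu ▸ le_rowLen_of_mem_cells hc)
    (le_rowLen_of_mem_cells hc') hentry
  have hlt : c.2 < X.outer.rowLen c'.1 := hrow ▸ (mem_cells_iff_s4.mp hc).2
  have hlt' := (mem_cells_iff_s4.mp hc').2
  rw [hrow] at hu
  exact Prod.ext hrow (by omega)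

variable (X)

lemma rowFilling_hasContent : HasContent X.rowFilling (X.rowsK 1) := by
  intro v
  rw [contentCount, ← card_range ((X.rowsK 1).getD v 0)]
  refine card_bij (fun c _ => X.outer.rowLen c.1 - c.2 - 1) (fun c hc => ?_)
    (fun c hc c' hc' h => ?_) fun x hx => ?_
  · obtain ⟨hcA, hcv⟩ := mem_filter.mp hc
    have hcu := le_rowLen_of_mem_cells hcA
    have hpos := (mem_cells_iff_s4.mp hcA).2
    rw [rowFilling_entry hcA] at hcv
    have hle := longRowsUpTo_le_card (u := X.outer.rowLen c.1 - c.2) (fst_lt_numRows hcA)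
    rw [mem_range, ← lt_countP_iff_lt_getD (X.rowsK_one ▸ sortedParts_pairwise _ _), rowsK_one,
      countP_sortedParts]
    refine (Nat.lt_of_succ_le (hcv ▸ hle)).trans_le (card_le_card fun i hi => ?_)
    rw [mem_filter] at hi ⊢
    exact ⟨hi.1, by omega⟩
  · obtain ⟨hcA, hcv⟩ := mem_filter.mp hc
    obtain ⟨hcA', hcv'⟩ := mem_filter.mp hc'
    have := (mem_cells_iff_s4.mp hcA).2
    have := (mem_cells_iff_s4.mp hcA').2
    exact eq_of_rowFilling_entry_eq hcA hcA' (hcv.trans hcv'.symm) (by omega)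
  · rw [mem_range, ← lt_countP_iff_lt_getD (X.rowsK_one ▸ sortedParts_pairwise _ _), rowsK_one,
      countP_sortedParts] at hx
    obtain ⟨ρ, hρu, hρ⟩ := exists_longRowsUpTo_eq (u := x + 1) (w := v + 1) (by omega)
      (hx.trans_eq (congrArg card (filter_congr fun i _ => Nat.succ_le_iff.symm)))
    have hρ' : x + 1 ≤ X.outer.rowLen ρ := by rw [rowLen] at hρu; omega
    refine ⟨_, mem_filter.mpr ⟨mem_cells_of_le_rowLen (Nat.succ_pos x) hρu, ?_⟩, by
      simp only; omega⟩
    rwa [rowFilling_entry_of_le_rowLen (Nat.succ_pos x) hρu]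

/-- A box with entry `v + 2`, `u`-th from the right of its row, is matched with the box `u`-th
from the right in the nearest row above of length at least `u`, whose entry is `v + 1`. -/
lemma rowFilling_isLR : IsLR X.rowFilling := by
  intro c hc v hv
  let u : ℕ × ℕ → ℕ := fun c' => X.outer.rowLen c'.1 - c'.2
  refine (card_le_card_of_injOn u (t := image u _) (fun c' hc' => ?_)
    fun c₁ hc₁ c₂ hc₂ h => ?_).trans (card_image_le (f := u))
  · obtain ⟨hc'A, hc'v, hc'c⟩ := mem_filter.mp hc'
    have hu₀ : 0 < u c' := Nat.sub_pos_of_lt (mem_cells_iff_s4.mp hc'A).2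
    rw [rowFilling_entry hc'A] at hc'v
    change X.longRowsUpTo (u c') c'.1 = v + 2 at hc'v
    obtain ⟨ρ, hρu, hρ⟩ :=
      exists_longRowsUpTo_eq (X := X) (u := u c') (w := v + 1) (by omega)
      (by have := longRowsUpTo_le_card (u := u c') (fst_lt_numRows hc'A); omega)
    have hρc' : ρ < c'.1 := by
      by_contra! h
      have := longRowsUpTo_le_of_le_right (X := X) (u c') h
      omega
    have hc'c : c'.1 ≤ c.1 := by
      rcases hc'c with h | rfl
      · exact h.elim le_of_lt (fun h => h.1.le)
      · exact le_rfl
    refine mem_image.mpr ⟨(ρ, X.outer.rowLen ρ - u c'), mem_filter.mpr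
      ⟨mem_cells_of_le_rowLen hu₀ hρu, ?_, Or.inl (hρc'.trans_le hc'c)⟩, ?_⟩
    · rw [rowFilling_entry_of_le_rowLen hu₀ hρu, hρ]
    · exact Nat.sub_sub_self (hρu.trans (Nat.sub_le _ _))
  · obtain ⟨hc₁A, hc₁v, -⟩ := mem_filter.mp hc₁
    obtain ⟨hc₂A, hc₂v, -⟩ := mem_filter.mp hc₂
    exact eq_of_rowFilling_entry_eq hc₁A hc₂A (hc₁v.trans hc₂v.symm) h

lemma rowsK_one_mem_support : X.rowsK 1 ∈ X.support :=
  ⟨X.rowsK_one ▸ sortedParts_pairwise _ _, X.rowFilling, X.rowFilling_isLR,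
    X.rowFilling_hasContent⟩

end SkewShape

/-- second part of Proposition `pro:extreme_fillings`.
Let `A` and `B` be skew shapes.  If the difference `s_A − s_B` of their skew Schur
functions is Schur-positive, then `rows(A) ⊴ rows(B)` and `cols(A) ⊴ cols(B)` in the
dominance order, where `rows(·)` and `cols(·)` denote the partitions of row lengths
and column lengths respectively. -/
theorem rows_cols_dom_of_schurPositiveDiff (A B : SkewShape)
    (h : SchurPositiveDiff A B) :
    Dom (A.rowsK 1) (B.rowsK 1) ∧ Dom (A.colsK 1) (B.colsK 1) := by
  refine ⟨dom_rowsK_one_of_mem_support (h.support_subset B.rowsK_one_mem_support), fun k => ?_⟩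
  calc ((A.colsK 1).take k).sum
      ≤ ∑ v ∈ range (conj (B.colsK 1)).length, min ((conj (B.colsK 1)).getD v 0) k :=
        sum_take_colsK_one_le (h.support_subset B.conj_colsK_one_mem_support) k
    _ = ((B.colsK 1).take k).sum :=
        sum_range_min_conj_getD (B.colsK_one ▸ sortedParts_pairwise _ _) k
end

section
/- Let A and B be skew shapes and fix k ≥ 1. Then rows_k(A) ⊴ rows_k(B) in the dominance order if and only if rects_{k,l}(A) ≤ rects_{k,l}(B) for all l ≥ 1. -/
open Finset

/-!
For a weakly decreasing `a` and `t ∈ ℕ`, the truncated sum `Σᵢ (aᵢ - t)₊` equals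
`max_m (a₁ + ⋯ + a_m - m t)`, the maximum being attained at `m = #{i | aᵢ > t}`; conversely
`a₁ + ⋯ + a_m = min_t (Σᵢ (aᵢ - t)₊ + m t)`, attained at `t = a_{m+1}`. Hence `a ⊴ b` if and
only if `Σᵢ (aᵢ - t)₊ ≤ Σᵢ (bᵢ - t)₊` for every `t`.

The columns shared by rows `i, …, i+k-1` of a skew shape form the interval
`[μ_i, λ_{i+k-1})`, so the `k × l` rectangles with top row `i` are the `(overlap_k(i) - (l-1))₊`
ways to place `l` consecutive columns in it, and `rects_{k,l}(A) = Σᵢ (overlap_k(i) - (l-1))₊`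
is the truncated sum of `rows_k(A)` at `t = l - 1`.
-/

def excessSum (t : ℕ) (l : List ℕ) : ℕ := (l.map (· - t)).sum

section excessSum

variable {t : ℕ}

@[simp]
lemma excessSum_nil : excessSum t [] = 0 := rfl

@[simp]
lemma excessSum_cons (x : ℕ) (l : List ℕ) :
    excessSum t (x :: l) = (x - t) + excessSum t l := List.sum_cons

lemma List.Perm.excessSum_eq {a b : List ℕ} (h : a.Perm b) : excessSum t a = excessSum t b :=
  (h.map _).sum_eq

lemma excessSum_filter_pos (l : List ℕ) : excessSum t (l.filter (0 < ·)) = excessSum t l := by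
  induction l with
  | nil => rfl
  | cons x l ih => rcases x with _ | x <;> simp [ih]

lemma excessSum_eq_zero_of_forall_le {l : List ℕ} (h : ∀ x ∈ l, x ≤ t) : excessSum t l = 0 :=
  List.sum_eq_zero fun y hy => by
    obtain ⟨x, hx, rfl⟩ := List.mem_map.1 hy
    exact Nat.sub_eq_zero_of_le (h x hx)

lemma sum_take_le_excessSum_add_mul (a : List ℕ) (m : ℕ) :
    (a.take m).sum ≤ excessSum t a + m * t := by
  induction a generalizing m with
  | nil => simp
  | cons x a ih =>
    cases m with
    | zero => simp
    | succ m =>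
      have := ih m
      simp only [List.take_succ_cons, List.sum_cons, excessSum_cons, Nat.succ_mul]
      omega

lemma List.SortedGE.exists_sum_take_eq_excessSum_add_mul {a : List ℕ} (ha : a.SortedGE)
    (t : ℕ) : ∃ m, (a.take m).sum = excessSum t a + m * t := by
  induction a with
  | nil => exact ⟨0, by simp⟩
  | cons x a ih =>
    obtain ⟨hxa, ha⟩ := List.pairwise_cons.1 ha.pairwise
    by_cases hx : t < x
    · obtain ⟨m, hm⟩ := ih ha.sortedGE
      refine ⟨m + 1, ?_⟩
      simp only [List.take_succ_cons, List.sum_cons, excessSum_cons, hm, Nat.succ_mul]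
      omega
    · have hxt := not_lt.1 hx
      refine ⟨0, ?_⟩
      rw [excessSum_eq_zero_of_forall_le
        (List.forall_mem_cons.2 ⟨hxt, fun y hy => (hxa y hy).trans hxt⟩)]
      simp

end excessSum

lemma List.getD_zero_le_of_forall_le {l : List ℕ} {x : ℕ} (h : ∀ y ∈ l, y ≤ x) (m : ℕ) :
    l.getD m 0 ≤ x := by
  rw [List.getD_eq_getElem?_getD]
  cases hm : l[m]? with
  | none => exact Nat.zero_le x
  | some y => exact h y (List.mem_of_getElem? hm)

lemma List.SortedGE.excessSum_getD_add_mul_le_sum_take {b : List ℕ} (hb : b.SortedGE) (m : ℕ) :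
    excessSum (b.getD m 0) b + m * b.getD m 0 ≤ (b.take m).sum := by
  induction b generalizing m with
  | nil => simp
  | cons x b ih =>
    obtain ⟨hxb, hb⟩ := List.pairwise_cons.1 hb.pairwise
    cases m with
    | zero =>
      simpa using (excessSum_eq_zero_of_forall_le (List.forall_mem_cons.2 ⟨le_rfl, hxb⟩)).le
    | succ m =>
      have htx : b.getD m 0 ≤ x := List.getD_zero_le_of_forall_le hxb m
      have := ih hb.sortedGE m
      simp only [List.getD_cons_succ, List.take_succ_cons, List.sum_cons, excessSum_cons,
        Nat.succ_mul]
      omega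

lemma dom_iff_forall_excessSum_le {a b : List ℕ} (ha : a.SortedGE) (hb : b.SortedGE) :
    Dom a b ↔ ∀ t, excessSum t a ≤ excessSum t b := by
  constructor
  · intro hab t
    obtain ⟨m, hm⟩ := ha.exists_sum_take_eq_excessSum_add_mul t
    have := sum_take_le_excessSum_add_mul (t := t) b m
    have := hab m
    omega
  · intro hab m
    calc (a.take m).sum ≤ excessSum (b.getD m 0) a + m * b.getD m 0 :=
          sum_take_le_excessSum_add_mul a m
      _ ≤ excessSum (b.getD m 0) b + m * b.getD m 0 := Nat.add_le_add_right (hab _) _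
      _ ≤ (b.take m).sum := hb.excessSum_getD_add_mul_le_sum_take m

namespace SkewShape

variable (A : SkewShape) {k : ℕ}

lemma sortedGE_rowsK (k : ℕ) : (A.rowsK k).SortedGE :=
  List.sortedGE_mergeSort

lemma mk_mem_cells_iff {i j : ℕ} :
    (i, j) ∈ A.cells ↔ A.inner.rowLen i ≤ j ∧ j < A.outer.rowLen i := by
  simp only [cells, Finset.mem_sdiff, YoungDiagram.mem_cells, YoungDiagram.mem_iff_lt_rowLen]
  omega

lemma rowLen_outer_le_numCols (i : ℕ) : A.outer.rowLen i ≤ A.numCols :=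
  A.outer.rowLen_anti 0 i (Nat.zero_le i)

lemma forall_mem_cells_column_iff (hk : 1 ≤ k) (i j : ℕ) :
    (∀ t < k, (i + t, j) ∈ A.cells) ↔
      A.inner.rowLen i ≤ j ∧ j < A.outer.rowLen (i + k - 1) := by
  constructor
  · intro h
    have top := A.mk_mem_cells_iff.1 (by simpa using h 0 hk)
    have bottom := A.mk_mem_cells_iff.1 (h (k - 1) (by omega))
    rw [Nat.add_sub_assoc hk]
    exact ⟨top.1, bottom.2⟩
  · rintro ⟨hinner, houter⟩ t ht
    rw [mk_mem_cells_iff]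
    exact ⟨(A.inner.rowLen_anti i (i + t) (by omega)).trans hinner,
      houter.trans_le (A.outer.rowLen_anti (i + t) (i + k - 1) (by omega))⟩

lemma forall_mem_cells_rectangle_iff (hk : 1 ≤ k) {l : ℕ} (hl : 1 ≤ l) (i j : ℕ) :
    (∀ t < k, ∀ u < l, (i + t, j + u) ∈ A.cells) ↔
      A.inner.rowLen i ≤ j ∧ j + l ≤ A.outer.rowLen (i + k - 1) := by
  constructor
  · intro h
    have left := (A.forall_mem_cells_column_iff hk i j).1 fun t ht => h t ht 0 hl
    have right := (A.forall_mem_cells_column_iff hk i (j + (l - 1))).1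
      fun t ht => h t ht (l - 1) (by omega)
    omega
  · intro h t ht u hu
    exact (A.forall_mem_cells_column_iff hk i (j + u)).2 (by omega) t ht

lemma overlap_eq (hk : 1 ≤ k) (i : ℕ) :
    A.overlap k i = A.outer.rowLen (i + k - 1) - A.inner.rowLen i := by
  have := A.rowLen_outer_le_numCols (i + k - 1)
  rw [overlap, ← Nat.card_Ico (A.inner.rowLen i)]
  congr 1
  ext j
  simp only [Finset.mem_filter, Finset.mem_range, Finset.mem_Ico,
    A.forall_mem_cells_column_iff hk]
  omega

lemma overlap_eq_zero_of_numRows_le (hk : 1 ≤ k) {i : ℕ} (h : A.numRows ≤ i + k - 1) :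
    A.overlap k i = 0 := by
  have : A.outer.rowLen (i + k - 1) = 0 := by
    by_contra hne
    have := YoungDiagram.mem_iff_lt_colLen.1
      (YoungDiagram.mem_iff_lt_rowLen.2 (Nat.pos_of_ne_zero hne))
    exact absurd h (not_le.2 this)
  rw [A.overlap_eq hk, this, Nat.zero_sub]

lemma rects_eq_sum_overlap (hk : 1 ≤ k) {l : ℕ} (hl : 1 ≤ l) :
    A.rects k l = ∑ i ∈ range A.numRows, (A.overlap k i - (l - 1)) := by
  rw [rects, card_filter, sum_product]
  refine sum_congr rfl fun i _ => ?_
  have := A.rowLen_outer_le_numCols (i + k - 1)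
  rw [← card_filter]
  trans (Ico (A.inner.rowLen i) (A.outer.rowLen (i + k - 1) + 1 - l)).card
  · congr 1
    ext j
    simp only [mem_filter, mem_range, mem_Ico, A.forall_mem_cells_rectangle_iff hk hl]
    omega
  · rw [Nat.card_Ico, A.overlap_eq hk]
    omega

lemma rects_eq_excessSum_rowsK (hk : 1 ≤ k) {l : ℕ} (hl : 1 ≤ l) :
    A.rects k l = excessSum (l - 1) (A.rowsK k) := by
  rw [rowsK, sortDesc, (List.mergeSort_perm _ _).excessSum_eq, excessSum_filter_pos, excessSum,
    List.map_map, ← List.sum_toFinset _ List.nodup_range, List.toFinset_range,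
    A.rects_eq_sum_overlap hk hl]
  refine (sum_subset (range_subset_range.2 (by omega)) fun i hi hi' => ?_).symm
  simp only [mem_range, not_lt] at hi hi'
  simp [A.overlap_eq_zero_of_numRows_le hk (i := i) (by omega)]

end SkewShape

/-- first part of Proposition `pro:3measures`.
Let `A` and `B` be skew shapes and fix `k ≥ 1`.  Then `rows_k(A) ⊴ rows_k(B)` in the
dominance order if and only if `rects_{k,l}(A) ≤ rects_{k,l}(B)` for all `l ≥ 1`. -/
theorem rowsK_dom_iff_rects_le (A B : SkewShape) (k : ℕ) (hk : 1 ≤ k) :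
    Dom (A.rowsK k) (B.rowsK k) ↔ ∀ l, 1 ≤ l → A.rects k l ≤ B.rects k l := by
  rw [dom_iff_forall_excessSum_le (A.sortedGE_rowsK k) (B.sortedGE_rowsK k)]
  constructor
  · intro h l hl
    rw [A.rects_eq_excessSum_rowsK hk hl, B.rects_eq_excessSum_rowsK hk hl]
    exact h _
  · intro h t
    simpa [A.rects_eq_excessSum_rowsK hk, B.rects_eq_excessSum_rowsK hk] using h (t + 1)
end
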